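/- arXiv:2509.18704 — 8 statements merged into one kernel-verified Lean document; each statement's English description precedes it below -/
import Mathlib

section
/- Let q be a prime power, k a positive integer, c a nonzero element of F_{q^k}, and ξ a primitive element of F_{q^k}. Then there exists a subset A of {0, 1, ..., q^k - 2} of size ⌊(q^k - 2)/2⌋ such that c·ξ^{i+j} ≠ 1 for all i, j ∈ A. -/
/-- Let `q` be a prime power, `k` a positive integer, `c` a nonzero
element of `F_{q^k}`, and `ξ` a primitive element of `F_{q^k}`. Then there exists a
subset `A ⊆ {0, 1, ..., q^k - 2}` of size `⌊(q^k - 2)/2⌋` such that `c·ξ^(i+j) ≠ 1`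
for all `i, j ∈ A`. -/
theorem stmt_0 (q k : ℕ) (hq : IsPrimePow q) (hk : 0 < k)
    (F : Type*) [Field F] [Fintype F] (hF : Fintype.card F = q ^ k)
    (c : F) (hc : c ≠ 0)
    (ξ : F) (hξ : orderOf ξ = q ^ k - 1) :
    ∃ A : Finset ℕ, A ⊆ Finset.range (q ^ k - 1) ∧ A.card = (q ^ k - 2) / 2 ∧
      ∀ i ∈ A, ∀ j ∈ A, c * ξ ^ (i + j) ≠ 1 := by
  set n := q ^ k - 1 with hn
  have hq2 : 2 ≤ q ^ k := by
    have : 2 ≤ q := hq.two_le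
    calc 2 ≤ q := this
    _ = q ^ 1 := (pow_one q).symm
    _ ≤ q ^ k := Nat.pow_le_pow_right (by omega) hk
  have hn1 : 1 ≤ n := by omega
  classical
  have hξ0 : ξ ≠ 0 := by
    intro h
    have h1 : ξ ^ n = 1 := hξ ▸ pow_orderOf_eq_one ξ
    rw [h, zero_pow (by omega : n ≠ 0)] at h1
    exact zero_ne_one h1
  set u : Fˣ := Units.mk0 ξ hξ0 with hu_def
  have hu : orderOf u = n := by
    rw [← orderOf_units]; exact hξ
  have hcardU : Nat.card Fˣ = n := by
    rw [Nat.card_eq_fintype_card, Fintype.card_units, hF]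
  have htop : Subgroup.zpowers u = ⊤ := by
    apply Subgroup.eq_top_of_card_eq
    rw [Nat.card_zpowers, hu, hcardU]
  obtain ⟨z, hz⟩ := Subgroup.mem_zpowers_iff.mp
    (htop ▸ Subgroup.mem_top ((Units.mk0 c hc)⁻¹))
  set t : ℕ := (z % (n : ℤ)).toNat with ht_def
  have hnz : (0:ℤ) < (n:ℤ) := by exact_mod_cast hn1
  have ht_lt : t < n := by
    have h1 : z % (n : ℤ) < n := Int.emod_lt_of_pos z hnz
    have h2 : 0 ≤ z % (n : ℤ) := Int.emod_nonneg z (by omega)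
    omega
  have hut : u ^ t = (Units.mk0 c hc)⁻¹ := by
    have : u ^ (t : ℤ) = u ^ z := by
      rw [ht_def, Int.toNat_of_nonneg (Int.emod_nonneg z (by omega)), ← hu,
        zpow_mod_orderOf]
    rw [← hz, ← this, zpow_natCast]
  have hct : c * ξ ^ t = 1 := by
    have := congrArg (fun v : Fˣ => ((Units.mk0 c hc) * v : Fˣ)) hut
    simp only [mul_inv_cancel] at this
    have h2 := congrArg (Units.val) this
    simpa [hu_def] using h2
  -- key: c * ξ ^ x = 1 → x ≡ t [MOD n]
  have key : ∀ x : ℕ, c * ξ ^ x = 1 → x % n = t := by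
    intro x hx
    have : c * ξ ^ x = c * ξ ^ t := by rw [hx, hct]
    have h2 : ξ ^ x = ξ ^ t := mul_left_cancel₀ hc this
    have h2u : u ^ x = u ^ t := Units.ext (by simpa [hu_def] using h2)
    have h3 : x ≡ t [MOD n] := by
      have := pow_eq_pow_iff_modEq.mp h2u
      rwa [hu] at this
    have := h3.symm
    unfold Nat.ModEq at h3
    rw [h3, Nat.mod_eq_of_lt ht_lt]
  set m : ℕ := (n - 1) / 2 with hm_def
  set a : ℕ := if 2 * m - 1 ≤ t then 0 else (t + 2) / 2 with ha_def
  refine ⟨Finset.Ico a (a + m), ?_, ?_, ?_⟩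
  · intro x hx
    rw [Finset.mem_Ico] at hx
    rw [Finset.mem_range]
    split at ha_def <;> omega
  · rw [Nat.card_Ico]; omega
  · intro i hi j hj hbad
    rw [Finset.mem_Ico] at hi hj
    have hmod := key (i + j) hbad
    -- i + j < 2 * n, so i + j = t or i + j = t + n
    have hij : i + j = t ∨ i + j = t + n := by
      have h2 : i + j < 2 * n := by split at ha_def <;> omega
      rcases Nat.lt_or_ge (i + j) n with h | h
      · left; rw [Nat.mod_eq_of_lt h] at hmod; omega
      · right
        have : (i + j) % n = (i + j - n) % n := by
          conv_lhs => rw [← Nat.sub_add_cancel h]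
          rw [Nat.add_mod_right]
        rw [this, Nat.mod_eq_of_lt (by omega)] at hmod
        omega
    split at ha_def <;> omega
end

section
/- Let q be a prime power, k ≥ 2, n = (2r+1)k with r ≥ 2, and γ ∈ F_{q^n} a root of an irreducible polynomial of degree 2r+1 over F_{q^k}. Fix δ_1, ..., δ_r ∈ F_{q^k}^* and 1 ≤ l ≤ r. Then V = { v + v^q γ^l + Σ_{b=1, b≠l}^{r} v δ_b γ^b : v ∈ F_{q^k} } is a Sidon space: for any nonzero a, b, c, d ∈ V with ab = cd, one has {a F_q, b F_q} = {c F_q, d F_q}. -/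
open Module
open Polynomial



def sidonCo {M : Type*} [CommRing M] (q l : ℕ) (δ : ℕ → M) (v : M) (b : ℕ) : M :=
  if b = 0 then v else if b = l then v ^ q else v * δ b

noncomputable def sidonP {M : Type*} [CommRing M] (q l r : ℕ) (δ : ℕ → M) (v : M) :
    Polynomial M :=
  ∑ b ∈ Finset.range (r + 1), Polynomial.monomial b (sidonCo q l δ v b)

lemma sidonP_coeff {M : Type*} [CommRing M] (q l r : ℕ) (δ : ℕ → M) (v : M) (t : ℕ) :
    (sidonP q l r δ v).coeff t = if t < r + 1 then sidonCo q l δ v t else 0 := by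
  rw [sidonP, Polynomial.finset_sum_coeff]
  simp only [Polynomial.coeff_monomial]
  rw [Finset.sum_ite_eq' (Finset.range (r+1)) t]
  simp [Finset.mem_range]

lemma sidonP_natDegree {M : Type*} [CommRing M] (q l r : ℕ) (δ : ℕ → M) (v : M) :
    (sidonP q l r δ v).natDegree ≤ r := by
  apply Polynomial.natDegree_sum_le_of_forall_le
  intro b hb
  exact le_trans (Polynomial.natDegree_monomial_le _) (by simpa using Nat.lt_succ_iff.mp (Finset.mem_range.mp hb))

lemma aux_indep {M L : Type*} [Field M] [Field L] [Algebra M L] (N : ℕ) (γ : L)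
    (fpoly : Polynomial M) (hirr : Irreducible fpoly) (hdeg : fpoly.natDegree = N + 1)
    (hroot : Polynomial.aeval γ fpoly = 0) (Q : Polynomial M) (hQ : Q.natDegree ≤ N)
    (hev : Polynomial.aeval γ Q = 0) : Q = 0 := by
  by_contra hne
  have h1 := minpoly.degree_le_of_ne_zero M γ hne hev
  have h2 := minpoly.eq_of_irreducible hirr hroot
  have hlc : fpoly.leadingCoeff ≠ 0 := Polynomial.leadingCoeff_ne_zero.mpr hirr.ne_zero
  have hCne : (Polynomial.C fpoly.leadingCoeff⁻¹ : Polynomial M) ≠ 0 := by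
    simpa using inv_ne_zero hlc
  have hmdeg : (minpoly M γ).natDegree = N + 1 := by
    rw [← h2, Polynomial.natDegree_mul hirr.ne_zero hCne, Polynomial.natDegree_C, hdeg, add_zero]
  have := Polynomial.natDegree_le_natDegree h1
  omega

lemma aux_fixed (q : ℕ) (hq : 2 ≤ q) {K M : Type*} [Field K] [Fintype K] [Field M]
    [Algebra K M] (hK : Fintype.card K = q) (x : M) (hx : x ^ q = x) :
    ∃ lam : K, algebraMap K M lam = x := by
  classical
  set P : Polynomial M := X ^ q - X with hP
  have hPdeg : P.natDegree = q := by
    have hlt : (X : Polynomial M).natDegree < (X ^ q : Polynomial M).natDegree := by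
      rw [Polynomial.natDegree_X_pow, Polynomial.natDegree_X]; omega
    rw [hP, Polynomial.natDegree_sub_eq_left_of_natDegree_lt hlt, Polynomial.natDegree_X_pow]
  have hP0 : P ≠ 0 := by
    intro h; rw [h] at hPdeg; simp at hPdeg; omega
  by_contra hcon
  push_neg at hcon
  set S : Finset M := Finset.univ.image (algebraMap K M) with hS
  have hcard : S.card = q := by
    rw [hS, Finset.card_image_of_injective _ (algebraMap K M).injective, Finset.card_univ, hK]
  have hxS : x ∉ S := by
    simp only [hS, Finset.mem_image, Finset.mem_univ, true_and]
    rintro ⟨lam, hlam⟩; exact hcon lam hlam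
  have hsub : insert x S ⊆ P.roots.toFinset := by
    intro y hy
    rw [Multiset.mem_toFinset, Polynomial.mem_roots']
    refine ⟨hP0, ?_⟩
    have hyq : y ^ q = y := by
      rcases Finset.mem_insert.mp hy with rfl | hyS
      · exact hx
      · obtain ⟨lam, -, rfl⟩ := Finset.mem_image.mp hyS
        rw [← map_pow]
        congr 1
        rw [← hK]; exact FiniteField.pow_card lam
    simp [hP, Polynomial.IsRoot, hyq]
  have h1 : (insert x S).card = q + 1 := by rw [Finset.card_insert_of_notMem hxS, hcard]
  have h2 : (insert x S).card ≤ P.roots.toFinset.card := Finset.card_le_card hsub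
  have h3 : P.roots.toFinset.card ≤ P.roots.card := Multiset.toFinset_card_le _
  have h4 := Polynomial.card_roots' P
  omega


/-- `V = { v + v^q γ^l + Σ_{b=1, b≠l}^{r} v δ_b γ^b : v ∈ F_{q^k} }`
is a Sidon space: for any nonzero `a, b, c, d ∈ V` with `ab = cd`, one has
`{aF_q, bF_q} = {cF_q, dF_q}`. -/
theorem stmt_3 (q k n r l : ℕ) (hq : IsPrimePow q) (hk : 2 ≤ k) (hr : 2 ≤ r)
    (hn : n = (2 * r + 1) * k) (hl : 1 ≤ l ∧ l ≤ r)
    (K M L : Type*) [Field K] [Fintype K] [Field M] [Fintype M] [Field L] [Fintype L]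
    [Algebra K M] [Algebra M L] [Algebra K L] [IsScalarTower K M L]
    (hK : Fintype.card K = q) (hM : Fintype.card M = q ^ k) (hL : Fintype.card L = q ^ n)
    (fpoly : Polynomial M) (hirr : Irreducible fpoly) (hdeg : fpoly.natDegree = 2 * r + 1)
    (γ : L) (hroot : Polynomial.aeval γ fpoly = 0)
    (δ : ℕ → M) (hδ : ∀ i, 1 ≤ i → i ≤ r → δ i ≠ 0) :
    ∃ V : Submodule K L,
      (V : Set L) = Set.range (fun v : M =>
        algebraMap M L v + algebraMap M L (v ^ q) * γ ^ l
        + ∑ b ∈ (Finset.Icc 1 r).filter (fun b => b ≠ l),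
            algebraMap M L (v * δ b) * γ ^ b) ∧
      ∀ a ∈ V, ∀ b ∈ V, ∀ c ∈ V, ∀ d ∈ V,
        a ≠ 0 → b ≠ 0 → c ≠ 0 → d ≠ 0 → a * b = c * d →
        ({Submodule.span K {a}, Submodule.span K {b}} : Set (Submodule K L)) =
          {Submodule.span K {c}, Submodule.span K {d}} := by
  classical
  obtain ⟨hl1, hlr⟩ := hl
  have hq2 : 2 ≤ q := hq.two_le
  obtain ⟨p, m, hp, hm, hpm⟩ := hq
  rw [← Nat.prime_iff] at hp
  -- characteristic
  haveI hchar : CharP M p := by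
    haveI h1 : CharP M (ringChar M) := ringChar.charP M
    have hp' : (ringChar M).Prime := CharP.char_is_prime M (ringChar M)
    obtain ⟨t, -, hcard⟩ := FiniteField.card M (ringChar M)
    have hdvd : p ∣ Fintype.card M := by
      rw [hM, ← hpm]
      exact dvd_trans (dvd_pow_self p hm.ne') (dvd_pow_self _ (by omega))
    rw [hcard] at hdvd
    have hpe : p = ringChar M :=
      (Nat.prime_dvd_prime_iff_eq hp hp').mp (hp.dvd_of_dvd_pow hdvd)
    exact hpe ▸ h1
  haveI : Fact p.Prime := ⟨hp⟩
  have hfrob_add : ∀ u v : M, (u + v) ^ q = u ^ q + v ^ q := by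
    intro u v; rw [← hpm]; exact add_pow_char_pow u v p m
  have hlamq : ∀ lam : K, lam ^ q = lam := by
    intro lam; rw [← hK]; exact FiniteField.pow_card lam
  set P : M → Polynomial M := sidonP q l r δ with hPdef
  set f : M → L := fun v => Polynomial.aeval γ (P v) with hf
  have hcoeff0 : ∀ v : M, (P v).coeff 0 = v := by
    intro v; rw [hPdef, sidonP_coeff, if_pos (by omega)]
    simp [sidonCo]
  have hcoeffl : ∀ v : M, (P v).coeff l = v ^ q := by
    intro v; rw [hPdef, sidonP_coeff, if_pos (by omega)]
    simp only [sidonCo, if_neg (by omega : ¬ l = 0), if_pos rfl]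
    simp
  have hcoeffmid : ∀ (v : M) (b : ℕ), 1 ≤ b → b ≤ r → b ≠ l → (P v).coeff b = v * δ b := by
    intro v b h1 h2 h3; rw [hPdef, sidonP_coeff, if_pos (by omega)]
    simp only [sidonCo, if_neg (by omega : ¬ b = 0), if_neg h3]
  -- degree-based vanishing
  have hvanish : ∀ Q : Polynomial M, Q.natDegree ≤ 2 * r → Polynomial.aeval γ Q = 0 → Q = 0 :=
    fun Q h1 h2 => aux_indep (2 * r) γ fpoly hirr hdeg hroot Q h1 h2
  -- additivity
  have hPadd : ∀ u v : M, P (u + v) = P u + P v := by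
    intro u v
    rw [hPdef]; unfold sidonP
    rw [← Finset.sum_add_distrib]
    refine Finset.sum_congr rfl fun b _ => ?_
    rw [← map_add]
    congr 1
    unfold sidonCo
    split_ifs
    · rfl
    · exact hfrob_add u v
    · ring
  have hfadd : ∀ u v : M, f (u + v) = f u + f v := by
    intro u v; rw [hf]; simp only [hPadd, map_add]
  -- scalar multiplication
  have hPsmul : ∀ (lam : K) (v : M),
      P (algebraMap K M lam * v) = Polynomial.C (algebraMap K M lam) * P v := by
    intro lam v
    rw [hPdef]; unfold sidonP
    rw [Finset.mul_sum]
    refine Finset.sum_congr rfl fun b _ => ?_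
    rw [Polynomial.C_mul_monomial]
    congr 1
    unfold sidonCo
    split_ifs
    · rfl
    · rw [mul_pow, ← map_pow, hlamq]
    · ring
  have hfsmul : ∀ (lam : K) (v : M),
      f (algebraMap K M lam * v) = algebraMap K L lam * f v := by
    intro lam v
    rw [hf]
    simp only [hPsmul, map_mul, Polynomial.aeval_C]
    rw [IsScalarTower.algebraMap_apply K M L]
  have hf0 : f 0 = 0 := by
    have h00 : (0 : M) = algebraMap K M 0 * 0 := by simp
    rw [hf]
    show Polynomial.aeval γ (P 0) = 0
    rw [h00, hPsmul]
    simp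
  -- the formula for f
  have hformula : ∀ v : M, f v =
      algebraMap M L v + algebraMap M L (v ^ q) * γ ^ l
        + ∑ b ∈ (Finset.Icc 1 r).filter (fun b => b ≠ l),
            algebraMap M L (v * δ b) * γ ^ b := by
    intro v
    rw [hf]
    show Polynomial.aeval γ (P v) = _
    rw [hPdef]
    unfold sidonP
    rw [map_sum]
    simp only [Polynomial.aeval_monomial]
    rw [← Finset.sum_filter_add_sum_filter_not (Finset.range (r + 1)) (fun b => b = 0 ∨ b = l)]
    have hset1 : (Finset.range (r + 1)).filter (fun b => b = 0 ∨ b = l) = {0, l} := by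
      ext b
      simp only [Finset.mem_filter, Finset.mem_range, Finset.mem_insert, Finset.mem_singleton]
      omega
    have hset2 : (Finset.range (r + 1)).filter (fun b => ¬(b = 0 ∨ b = l)) =
        (Finset.Icc 1 r).filter (fun b => b ≠ l) := by
      ext b
      simp only [Finset.mem_filter, Finset.mem_range, Finset.mem_Icc, ne_eq]
      omega
    rw [hset1, hset2]
    congr 1
    · rw [Finset.sum_insert (by simp; omega), Finset.sum_singleton]
      simp only [sidonCo, if_pos rfl, if_neg (by omega : ¬ l = 0), pow_zero, mul_one]
      simp [(by omega : ¬ (0 = l))]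
    · refine Finset.sum_congr rfl fun b hb => ?_
      simp only [Finset.mem_filter, Finset.mem_Icc, ne_eq] at hb
      simp only [sidonCo, if_neg (by omega : ¬ b = 0), if_neg hb.2]
  -- the submodule
  refine ⟨{ carrier := Set.range f
            add_mem' := ?_
            zero_mem' := ⟨0, hf0⟩
            smul_mem' := ?_ }, ?_, ?_⟩
  · rintro x y ⟨u, rfl⟩ ⟨v, rfl⟩
    exact ⟨u + v, hfadd u v⟩
  · rintro lam x ⟨v, rfl⟩
    refine ⟨algebraMap K M lam * v, ?_⟩
    rw [hfsmul, Algebra.smul_def]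
  · ext x
    simp only [Submodule.coe_set_mk, AddSubmonoid.coe_set_mk, Set.mem_range]
    constructor
    · rintro ⟨v, rfl⟩; exact ⟨v, (hformula v).symm⟩
    · rintro ⟨v, hv⟩; exact ⟨v, by rw [hformula v, hv]⟩
  · rintro A ⟨u, rfl⟩ B ⟨v, rfl⟩ C ⟨w, rfl⟩ D ⟨z, rfl⟩ hA0 hB0 hC0 hD0 hABCD
    have hu0 : u ≠ 0 := fun h => hA0 (by rw [h, hf0])
    have hv0 : v ≠ 0 := fun h => hB0 (by rw [h, hf0])
    have hw0 : w ≠ 0 := fun h => hC0 (by rw [h, hf0])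
    have hz0 : z ≠ 0 := fun h => hD0 (by rw [h, hf0])
    -- the product polynomial identity
    have hPP : P u * P v = P w * P z := by
      have hev : Polynomial.aeval γ (P u * P v - P w * P z) = 0 := by
        rw [map_sub, map_mul, map_mul]
        show f u * f v - f w * f z = 0
        rw [hABCD, sub_self]
      have hdegsub := Polynomial.natDegree_sub_le (P u * P v) (P w * P z)
      have hd1 := Polynomial.natDegree_mul_le (p := P u) (q := P v)
      have hd2 := Polynomial.natDegree_mul_le (p := P w) (q := P z)
      have hs1 := sidonP_natDegree q l r δ u
      have hs2 := sidonP_natDegree q l r δ v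
      have hs3 := sidonP_natDegree q l r δ w
      have hs4 := sidonP_natDegree q l r δ z
      rw [← hPdef] at hs1 hs2 hs3 hs4
      exact sub_eq_zero.mp (hvanish _ (by omega) hev)
    -- coefficient of γ^0 : uv = wz
    have huv : u * v = w * z := by
      have h0 := congrArg (fun Q : Polynomial M => Q.coeff 0) hPP
      simpa [Polynomial.mul_coeff_zero, hcoeff0] using h0
    -- coefficient of γ^l
    have hsum : ∀ u v : M,
        ∑ i ∈ Finset.range (l + 1), (P u).coeff i * (P v).coeff (l - i)
          = u * v ^ q + u ^ q * v + (u * v) *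
            ∑ i ∈ (Finset.range (l + 1)).filter (fun i => ¬(i = 0 ∨ i = l)),
              δ i * δ (l - i) := by
      intro u v
      rw [← Finset.sum_filter_add_sum_filter_not (Finset.range (l + 1)) (fun i => i = 0 ∨ i = l)]
      have hset1 : (Finset.range (l + 1)).filter (fun i => i = 0 ∨ i = l) = {0, l} := by
        ext i
        simp only [Finset.mem_filter, Finset.mem_range, Finset.mem_insert, Finset.mem_singleton]
        omega
      rw [hset1, Finset.sum_insert (by simp; omega), Finset.sum_singleton]
      rw [Nat.sub_zero, Nat.sub_self, hcoeff0, hcoeffl, hcoeff0, hcoeffl]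
      have hcong : ∀ i ∈ (Finset.range (l + 1)).filter (fun i => ¬(i = 0 ∨ i = l)),
          (P u).coeff i * (P v).coeff (l - i) = u * v * (δ i * δ (l - i)) := by
        intro i hi
        simp only [Finset.mem_filter, Finset.mem_range] at hi
        rw [hcoeffmid u i (by omega) (by omega) (by omega),
          hcoeffmid v (l - i) (by omega) (by omega) (by omega)]
        ring
      rw [Finset.sum_congr rfl hcong, ← Finset.mul_sum]
    have hLcoeff := congrArg (fun Q : Polynomial M => Q.coeff l) hPP
    simp only [Polynomial.coeff_mul] at hLcoeff
    rw [Finset.Nat.sum_antidiagonal_eq_sum_range_succ_mk,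
      Finset.Nat.sum_antidiagonal_eq_sum_range_succ_mk] at hLcoeff
    rw [hsum u v, hsum w z] at hLcoeff
    rw [huv] at hLcoeff
    have hs : u * v ^ q + u ^ q * v = w * z ^ q + w ^ q * z := add_right_cancel hLcoeff
    -- pure field computation
    have hexp : ∀ x : M, x ^ q = x ^ (q - 1) * x := by
      intro x; rw [← pow_succ]; congr 1; omega
    have hsig : u ^ (q-1) + v ^ (q-1) = w ^ (q-1) + z ^ (q-1) := by
      have e1 : u * v ^ q + u ^ q * v = (u * v) * (v ^ (q-1) + u ^ (q-1)) := by
        rw [hexp v, hexp u]; ring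
      have e2 : w * z ^ q + w ^ q * z = (w * z) * (z ^ (q-1) + w ^ (q-1)) := by
        rw [hexp z, hexp w]; ring
      have h3 := hs
      rw [e1, e2, huv] at h3
      have h4 := mul_left_cancel₀ (mul_ne_zero hw0 hz0) h3
      linear_combination h4
    have hpi : u ^ (q-1) * v ^ (q-1) = w ^ (q-1) * z ^ (q-1) := by
      rw [← mul_pow, ← mul_pow, huv]
    have hquad : (u ^ (q-1) - w ^ (q-1)) * (u ^ (q-1) - z ^ (q-1)) = 0 := by
      linear_combination u ^ (q-1) * hsig - hpi
    -- common argument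
    have main : ∀ u' w' : M, u' ≠ 0 → w' ≠ 0 → u' ^ (q-1) = w' ^ (q-1) →
        ∃ lam : K, lam ≠ 0 ∧ u' = algebraMap K M lam * w' := by
      intro u' w' hu' hw' hE
      have hwpow : w' ^ (q-1) ≠ 0 := pow_ne_zero _ hw'
      have hx : (u' * w'⁻¹) ^ q = u' * w'⁻¹ := by
        rw [mul_pow, inv_pow, hexp u', hexp w', hE]
        field_simp
      obtain ⟨lam, hlam⟩ := aux_fixed q hq2 hK _ hx
      refine ⟨lam, ?_, ?_⟩
      · intro h0
        rw [h0, map_zero] at hlam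
        rcases mul_eq_zero.mp hlam.symm with h | h
        · exact hu' h
        · exact hw' (inv_eq_zero.mp h)
      · rw [hlam]; field_simp
    rcases mul_eq_zero.mp hquad with h | h
    · obtain ⟨lam, hlam0, hU⟩ := main u w hu0 hw0 (sub_eq_zero.mp h)
      have hZ : z = algebraMap K M lam * v := by
        apply mul_left_cancel₀ hw0
        rw [← huv, hU]; ring
      have hspan1 : Submodule.span K {f u} = Submodule.span K {f w} := by
        rw [hU, hfsmul, ← Algebra.smul_def]
        exact Submodule.span_singleton_smul_eq (isUnit_iff_ne_zero.mpr hlam0) _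
      have hspan2 : Submodule.span K {f z} = Submodule.span K {f v} := by
        rw [hZ, hfsmul, ← Algebra.smul_def]
        exact Submodule.span_singleton_smul_eq (isUnit_iff_ne_zero.mpr hlam0) _
      rw [hspan1, ← hspan2]
    · obtain ⟨lam, hlam0, hU⟩ := main u z hu0 hz0 (sub_eq_zero.mp h)
      have hW : w = algebraMap K M lam * v := by
        apply mul_right_cancel₀ hz0
        rw [← huv, hU]; ring
      have hspan1 : Submodule.span K {f u} = Submodule.span K {f z} := by
        rw [hU, hfsmul, ← Algebra.smul_def]
        exact Submodule.span_singleton_smul_eq (isUnit_iff_ne_zero.mpr hlam0) _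
      have hspan2 : Submodule.span K {f w} = Submodule.span K {f v} := by
        rw [hW, hfsmul, ← Algebra.smul_def]
        exact Submodule.span_singleton_smul_eq (isUnit_iff_ne_zero.mpr hlam0) _
      rw [hspan1, hspan2]
      exact Set.pair_comm _ _
end

section
/- Let q be a prime power, k ≥ 2, n = (2r+1)k with r ≥ 2, ξ primitive in F_{q^k}, γ a root of an irreducible polynomial of degree 2r+1 over F_{q^k}, δ_1, ..., δ_r ∈ F_{q^k}^*, θ ∈ {1, ξ, ..., ξ^{q-2}}, and p, l positive integers with (p=1 and 1 ≤ l ≤ r) or (p ≥ 2 and r/(p+1) < l ≤ r/p). Then U = { u + Σ_{a=1}^{p}(θ u^q + u) δ_{al} γ^{al} + Σ_{b=1, b∉{l,...,pl}}^{r} u δ_b γ^b : u ∈ F_{q^k} } is a Sidon space. -/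
/-!
Every element of `U` is `P_u(γ)` with `P_u = u A + u^q B` a polynomial of degree at most `r`,
where `B = θ Σ_a δ_{al} X^{al}`; as `u ↦ u^q` is `F_q`-linear, `U` is an `F_q`-subspace. Since
`γ` has degree `2r + 1`, a relation `ab = cd` in `U` lifts to `P_u P_v = P_w P_x`. The coefficients
of `1` and of `X^l`, the lowest power occurring in `B`, give `uv = wx` and
`u^q v + u v^q = w^q x + w x^q`, so `{u^q v, u v^q} = {w^q x, w x^q}` as the root sets of one
quadratic. Hence `w / u` or `w / v` is fixed by Frobenius, i.e. lies in `F_q`.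
-/

open Polynomial

lemma eq_or_eq_of_add_eq_add_of_mul_eq_mul {R : Type*} [CommRing R] [IsDomain R] {a b c d : R}
    (hsum : a + b = c + d) (hprod : a * b = c * d) : c = a ∨ c = b := by
  have h : (c - a) * (c - b) = 0 := by linear_combination (-c) * hsum + hprod
  rcases mul_eq_zero.mp h with h | h
  · exact Or.inl (sub_eq_zero.mp h)
  · exact Or.inr (sub_eq_zero.mp h)

namespace FiniteField

variable {K M : Type*} [Field K] [Fintype K] [Field M] [Algebra K M]

theorem mem_range_algebraMap_of_pow_card_eq {x : M} (hx : x ^ Fintype.card K = x) :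
    x ∈ (algebraMap K M).range := by
  have hsplit : (X ^ Fintype.card K - X : K[X]).Splits := by
    rw [splits_iff_card_roots, roots_X_pow_card_sub_X,
      X_pow_card_sub_X_natDegree_eq K Fintype.one_lt_card]
    rfl
  exact hsplit.mem_range_of_isRoot (X_pow_card_sub_X_ne_zero K Fintype.one_lt_card)
    (by simp [hx])

theorem exists_eq_smul_of_mul_eq_of_pow_card_mul_eq {u v w x : M} (hu : u ≠ 0) (hx : x ≠ 0)
    (hprod : u * v = w * x) (h : w ^ Fintype.card K * x = u ^ Fintype.card K * v) :
    ∃ c : K, w = c • u ∧ v = c • x := by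
  have hfix : (w / u) ^ Fintype.card K = w / u := by
    have : w ^ Fintype.card K * u = u ^ Fintype.card K * w := by
      apply mul_right_cancel₀ hx
      linear_combination u * h + u ^ Fintype.card K * hprod
    rw [div_pow, div_eq_div_iff (pow_ne_zero _ hu) hu]
    linear_combination this
  obtain ⟨c, hc⟩ := mem_range_algebraMap_of_pow_card_eq hfix
  have hw : w = c • u := by rw [Algebra.smul_def, hc, div_mul_cancel₀ w hu]
  refine ⟨c, hw, mul_left_cancel₀ hu ?_⟩
  rw [hprod, hw, Algebra.smul_def, Algebra.smul_def]
  ring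

theorem exists_eq_smul_of_mul_eq_of_add_eq {u v w x : M} (hu : u ≠ 0) (hv : v ≠ 0) (hx : x ≠ 0)
    (hprod : u * v = w * x)
    (hsum : u ^ Fintype.card K * v + u * v ^ Fintype.card K
      = w ^ Fintype.card K * x + w * x ^ Fintype.card K) :
    ∃ c : K, (w = c • u ∧ v = c • x) ∨ (w = c • v ∧ u = c • x) := by
  have hfrob : ∀ y z : M, y ^ Fintype.card K * z * (y * z ^ Fintype.card K)
      = (y * z) ^ Fintype.card K * (y * z) := fun _ _ ↦ by ring
  have hpow : u ^ Fintype.card K * v * (u * v ^ Fintype.card K)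
      = w ^ Fintype.card K * x * (w * x ^ Fintype.card K) := by
    rw [hfrob, hfrob, hprod]
  rcases eq_or_eq_of_add_eq_add_of_mul_eq_mul hsum hpow with h | h
  · obtain ⟨c, hc⟩ := exists_eq_smul_of_mul_eq_of_pow_card_mul_eq (K := K) hu hx hprod h
    exact ⟨c, Or.inl hc⟩
  · obtain ⟨c, hc⟩ := exists_eq_smul_of_mul_eq_of_pow_card_mul_eq (K := K) (v := u) (w := w)
      hv hx (by rw [mul_comm, hprod]) (by rw [h, mul_comm])
    exact ⟨c, Or.inr hc⟩

end FiniteField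

section Coeff

variable {R : Type*} [CommRing R] {A B : R[X]} {l : ℕ}

theorem coeff_zero_twist_mul_twist (hA : A.coeff 0 = 1) (hB : B.coeff 0 = 0) (a a' b b' : R) :
    ((C a * A + C a' * B) * (C b * A + C b' * B)).coeff 0 = a * b := by
  simp [mul_coeff_zero, hA, hB]

theorem coeff_twist_mul_twist (hl : 0 < l) (hB : ∀ i < l, B.coeff i = 0) (a a' b b' : R) :
    ((C a * A + C a' * B) * (C b * A + C b' * B)).coeff l
      = a * b * (A * A).coeff l + (a' * b + a * b') * (A.coeff 0 * B.coeff l) := by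
  obtain ⟨B, rfl⟩ := X_pow_dvd_iff.mpr hB
  have h : (C a * A + C a' * (X ^ l * B)) * (C b * A + C b' * (X ^ l * B))
      = C (a * b) * (A * A) + C (a' * b + a * b') * (X ^ l * (A * B))
        + C (a' * b') * (X ^ (l + l) * (B * B)) := by
    simp only [map_add, map_mul, pow_add]
    ring
  rw [h]
  simp only [coeff_add, coeff_C_mul, coeff_X_pow_mul', le_refl, if_true, Nat.sub_self,
    mul_coeff_zero, show ¬l + l ≤ l by omega, if_false, mul_zero, add_zero]

end Coeff

section Twist

variable (K : Type*) {M : Type*} [Field K] [Fintype K] [Field M] [Algebra K M]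

noncomputable def frobeniusTwist (A B : M[X]) : M →ₗ[K] M[X] :=
  LinearMap.id.smulRight A + (FiniteField.frobeniusAlgHom K M).toLinearMap.smulRight B

variable {K} {A B : M[X]}

theorem frobeniusTwist_apply (u : M) :
    frobeniusTwist K A B u = C u * A + C (u ^ Fintype.card K) * B := by
  simp [frobeniusTwist, smul_eq_C_mul]

theorem natDegree_frobeniusTwist_le {r : ℕ} (hA : A.natDegree ≤ r) (hB : B.natDegree ≤ r)
    (u : M) : (frobeniusTwist K A B u).natDegree ≤ r := by
  rw [frobeniusTwist_apply]
  exact natDegree_add_le_of_degree_le (natDegree_C_mul_le _ _ |>.trans hA)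
    (natDegree_C_mul_le _ _ |>.trans hB)

theorem mul_eq_and_add_eq_of_frobeniusTwist_mul_eq {l : ℕ} (hA : A.coeff 0 = 1) (hl : 0 < l)
    (hB : ∀ i < l, B.coeff i = 0) (hBl : B.coeff l ≠ 0) {u v w x : M}
    (h : frobeniusTwist K A B u * frobeniusTwist K A B v
      = frobeniusTwist K A B w * frobeniusTwist K A B x) :
    u * v = w * x ∧ u ^ Fintype.card K * v + u * v ^ Fintype.card K
      = w ^ Fintype.card K * x + w * x ^ Fintype.card K := by
  simp only [frobeniusTwist_apply] at h
  have hprod := congrArg (coeff · 0) h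
  have hcoeff := congrArg (coeff · l) h
  simp only [coeff_zero_twist_mul_twist hA (hB 0 hl)] at hprod
  simp only [coeff_twist_mul_twist hl hB, hA, one_mul, hprod] at hcoeff
  exact ⟨hprod, mul_right_cancel₀ hBl (add_left_cancel hcoeff)⟩

end Twist

def IsSidonSpace {K L : Type*} [Field K] [Field L] [Algebra K L] (U : Submodule K L) : Prop :=
  ∀ a ∈ U, ∀ b ∈ U, ∀ c ∈ U, ∀ d ∈ U, a ≠ 0 → b ≠ 0 → c ≠ 0 → d ≠ 0 → a * b = c * d →
    ({K ∙ a, K ∙ b} : Set (Submodule K L)) = {K ∙ c, K ∙ d}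

theorem span_singleton_apply_smul {K M L : Type*} [Field K] [AddCommGroup M] [Module K M]
    [AddCommGroup L] [Module K L] (f : M →ₗ[K] L) {c : K} (hc : c ≠ 0) (u : M) :
    K ∙ f (c • u) = K ∙ f u := by
  rw [map_smul]
  exact Submodule.span_singleton_smul_eq (IsUnit.mk0 c hc) _

theorem eq_of_aeval_eq_of_natDegree_lt {M L : Type*} [Field M] [Ring L] [Algebra M L] {γ : L}
    {P Q : M[X]} (hP : P.natDegree < (minpoly M γ).natDegree)
    (hQ : Q.natDegree < (minpoly M γ).natDegree) (h : aeval γ P = aeval γ Q) : P = Q := by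
  by_contra hne
  have hmin := natDegree_le_natDegree <|
    minpoly.degree_le_of_ne_zero M γ (sub_ne_zero.mpr hne) (by rw [map_sub, h, sub_self])
  have := natDegree_sub_le P Q
  omega

theorem isSidonSpace_range_aeval_comp_frobeniusTwist {K M L : Type*} [Field K] [Fintype K]
    [Field M] [Field L] [Algebra K M] [Algebra M L] [Algebra K L] [IsScalarTower K M L]
    {γ : L} {r l : ℕ} {A B : M[X]} (hγ : 2 * r < (minpoly M γ).natDegree)
    (hA : A.natDegree ≤ r) (hB : B.natDegree ≤ r) (hA0 : A.coeff 0 = 1) (hl : 0 < l)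
    (hBlow : ∀ i < l, B.coeff i = 0) (hBl : B.coeff l ≠ 0) :
    IsSidonSpace (LinearMap.range
      ((aeval γ).toLinearMap.restrictScalars K ∘ₗ frobeniusTwist K A B)) := by
  set φ := (aeval γ).toLinearMap.restrictScalars K ∘ₗ frobeniusTwist K A B
  have hdeg (u v : M) : (frobeniusTwist K A B u * frobeniusTwist K A B v).natDegree
      < (minpoly M γ).natDegree := by
    have := natDegree_frobeniusTwist_le (K := K) hA hB
    exact natDegree_mul_le.trans_lt (by linarith [this u, this v])
  have hne {y : M} (hy : φ y ≠ 0) : y ≠ 0 := fun h ↦ hy (by rw [h, map_zero])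
  rintro _ ⟨u, rfl⟩ _ ⟨v, rfl⟩ _ ⟨w, rfl⟩ _ ⟨x, rfl⟩ hu hv hw hx h
  have hlift := eq_of_aeval_eq_of_natDegree_lt (hdeg u v) (hdeg w x) (by simpa [φ] using h)
  obtain ⟨hprod, hsum⟩ := mul_eq_and_add_eq_of_frobeniusTwist_mul_eq hA0 hl hBlow hBl hlift
  obtain ⟨c, ⟨rfl, rfl⟩ | ⟨rfl, rfl⟩⟩ :=
    FiniteField.exists_eq_smul_of_mul_eq_of_add_eq (hne hu) (hne hv) (hne hx) hprod hsum
  · have hc : c ≠ 0 := by rintro rfl; simp at hw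
    rw [span_singleton_apply_smul φ hc, span_singleton_apply_smul φ hc]
  · have hc : c ≠ 0 := by rintro rfl; simp at hw
    rw [span_singleton_apply_smul φ hc, span_singleton_apply_smul φ hc, Set.pair_comm]

theorem natDegree_minpoly_eq_of_irreducible {M L : Type*} [Field M] [Ring L] [Nontrivial L]
    [Algebra M L] {γ : L} {f : M[X]} (hf : Irreducible f) (hγ : aeval γ f = 0) :
    (minpoly M γ).natDegree = f.natDegree := by
  rw [← minpoly.eq_of_irreducible hf hγ,
    natDegree_mul_C (inv_ne_zero (leadingCoeff_ne_zero.mpr hf.ne_zero))]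

section Progression

variable {M : Type*} [Field M] (δ : ℕ → M) (r p l : ℕ)

noncomputable def progressionPoly : M[X] :=
  ∑ a ∈ Finset.Icc 1 p, C (δ (a * l)) * X ^ (a * l)

noncomputable def offProgressionPoly : M[X] :=
  ∑ b ∈ (Finset.Icc 1 r).filter (fun b ↦ b ∉ (Finset.Icc 1 p).image (fun a ↦ a * l)),
    C (δ b) * X ^ b

variable {δ r p l}

theorem coeff_progressionPoly_of_lt {i : ℕ} (hi : i < l) :
    (progressionPoly δ p l).coeff i = 0 := by
  simp only [progressionPoly, finsetSum_coeff, coeff_C_mul_X_pow]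
  refine Finset.sum_eq_zero fun a ha ↦ if_neg ?_
  have := (Finset.mem_Icc.mp ha).1
  nlinarith

theorem coeff_progressionPoly_self (hp : 1 ≤ p) (hl : 0 < l) :
    (progressionPoly δ p l).coeff l = δ l := by
  simp only [progressionPoly, finsetSum_coeff, coeff_C_mul_X_pow]
  rw [Finset.sum_eq_single_of_mem 1 (Finset.mem_Icc.mpr ⟨le_rfl, hp⟩), one_mul, if_pos rfl]
  intro a _ ha
  exact if_neg fun h ↦ ha (by nlinarith)

theorem natDegree_progressionPoly_le : (progressionPoly δ p l).natDegree ≤ p * l :=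
  natDegree_sum_le_of_forall_le _ _ fun _ ha ↦ (natDegree_C_mul_X_pow_le _ _).trans
    (Nat.mul_le_mul_right l (Finset.mem_Icc.mp ha).2)

theorem coeff_zero_offProgressionPoly : (offProgressionPoly δ r p l).coeff 0 = 0 := by
  simp only [offProgressionPoly, finsetSum_coeff, coeff_C_mul_X_pow]
  refine Finset.sum_eq_zero fun b hb ↦ if_neg ?_
  have := (Finset.mem_Icc.mp (Finset.mem_filter.mp hb).1).1
  omega

theorem natDegree_offProgressionPoly_le : (offProgressionPoly δ r p l).natDegree ≤ r :=
  natDegree_sum_le_of_forall_le _ _ fun _ hb ↦ (natDegree_C_mul_X_pow_le _ _).trans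
    (Finset.mem_Icc.mp (Finset.mem_filter.mp hb).1).2

theorem aeval_frobeniusTwist_progressionPoly (K : Type*) {L : Type*} [Field K] [Fintype K]
    [Field L] [Algebra K M] [Algebra M L] (γ : L) (θ u : M) :
    aeval γ (frobeniusTwist K (1 + progressionPoly δ p l + offProgressionPoly δ r p l)
      (C θ * progressionPoly δ p l) u)
    = algebraMap M L u
      + ∑ a ∈ Finset.Icc 1 p,
          algebraMap M L ((θ * u ^ Fintype.card K + u) * δ (a * l)) * γ ^ (a * l)
      + ∑ b ∈ (Finset.Icc 1 r).filter (fun b ↦ b ∉ (Finset.Icc 1 p).image (fun a ↦ a * l)),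
          algebraMap M L (u * δ b) * γ ^ b := by
  simp only [frobeniusTwist_apply, progressionPoly, offProgressionPoly, map_add, map_mul, map_sum,
    map_one, map_pow, aeval_C, aeval_X, mul_assoc, ← Finset.mul_sum]
  ring

end Progression

theorem one_le_and_mul_le_of_progression_bounds {r p l : ℕ}
    (hpl : (p = 1 ∧ 1 ≤ l ∧ l ≤ r) ∨
      (2 ≤ p ∧ (r : ℚ) / (p + 1) < l ∧ (l : ℚ) ≤ (r : ℚ) / p)) :
    1 ≤ p ∧ 0 < l ∧ p * l ≤ r := by
  rcases hpl with ⟨rfl, hl, hlr⟩ | ⟨hp, hlow, hup⟩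
  · omega
  · have hp' : (0 : ℚ) < p := by positivity
    refine ⟨by omega, ?_, ?_⟩
    · have : (0 : ℚ) ≤ r / (p + 1) := by positivity
      exact_mod_cast this.trans_lt hlow
    · rw [le_div_iff₀ hp'] at hup
      exact_mod_cast (by push_cast; linarith [mul_comm (l : ℚ) p] : ((p * l : ℕ) : ℚ) ≤ r)

theorem stmt_4_general (q k r p l : ℕ) (hk : 2 ≤ k)
    (K M L : Type*) [Field K] [Fintype K] [Field M] [Field L]
    [Algebra K M] [Algebra M L] [Algebra K L] [IsScalarTower K M L]
    (hK : Fintype.card K = q)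
    (ξ : M) (hξ : orderOf ξ = q ^ k - 1)
    (fpoly : Polynomial M) (hirr : Irreducible fpoly) (hdeg : fpoly.natDegree = 2 * r + 1)
    (γ : L) (hroot : Polynomial.aeval γ fpoly = 0)
    (δ : ℕ → M) (hδ : ∀ i, 1 ≤ i → i ≤ r → δ i ≠ 0)
    (θ : M) (hθ : ∃ t : ℕ, t ≤ q - 2 ∧ θ = ξ ^ t)
    (hpl : (p = 1 ∧ 1 ≤ l ∧ l ≤ r) ∨
           (2 ≤ p ∧ (r : ℚ) / (p + 1) < l ∧ (l : ℚ) ≤ (r : ℚ) / p)) :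
    ∃ U : Submodule K L,
      (U : Set L) = Set.range (fun u : M =>
        algebraMap M L u
        + ∑ a ∈ Finset.Icc 1 p,
            algebraMap M L ((θ * u ^ q + u) * δ (a * l)) * γ ^ (a * l)
        + ∑ b ∈ (Finset.Icc 1 r).filter
            (fun b => b ∉ (Finset.Icc 1 p).image (fun a => a * l)),
            algebraMap M L (u * δ b) * γ ^ b) ∧
      ∀ a ∈ U, ∀ b ∈ U, ∀ c ∈ U, ∀ d ∈ U,
        a ≠ 0 → b ≠ 0 → c ≠ 0 → d ≠ 0 → a * b = c * d →
        ({Submodule.span K {a}, Submodule.span K {b}} : Set (Submodule K L)) =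
          {Submodule.span K {c}, Submodule.span K {d}} := by
  obtain ⟨hp, hl, hplr⟩ := one_le_and_mul_le_of_progression_bounds hpl
  have hθ0 : θ ≠ 0 := by
    obtain ⟨t, -, rfl⟩ := hθ
    refine pow_ne_zero t fun hξ0 ↦ ?_
    rw [hξ0, orderOf_zero] at hξ
    have := Nat.one_lt_pow (by omega : k ≠ 0) (hK ▸ Fintype.one_lt_card : 1 < q)
    omega
  subst hK
  refine ⟨LinearMap.range ((aeval γ).toLinearMap.restrictScalars K ∘ₗ
    frobeniusTwist K (1 + progressionPoly δ p l + offProgressionPoly δ r p l)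
      (C θ * progressionPoly δ p l)), ?_, ?_⟩
  · rw [LinearMap.coe_range]
    congr 1
    funext u
    exact aeval_frobeniusTwist_progressionPoly K γ θ u
  · refine isSidonSpace_range_aeval_comp_frobeniusTwist (r := r) (l := l) ?_ ?_ ?_ ?_ hl ?_ ?_
    · rw [natDegree_minpoly_eq_of_irreducible hirr hroot, hdeg]
      omega
    · exact natDegree_add_le_of_degree_le (natDegree_add_le_of_degree_le (by simp)
        (natDegree_progressionPoly_le.trans hplr)) natDegree_offProgressionPoly_le
    · exact (natDegree_C_mul_le _ _).trans (natDegree_progressionPoly_le.trans hplr)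
    · simp [coeff_progressionPoly_of_lt hl, coeff_zero_offProgressionPoly]
    · intro i hi
      rw [coeff_C_mul, coeff_progressionPoly_of_lt hi, mul_zero]
    · rw [coeff_C_mul, coeff_progressionPoly_self hp hl]
      exact mul_ne_zero hθ0 (hδ l hl ((Nat.le_mul_of_pos_left l hp).trans hplr))

/-- The subspace
`U = { u + Σ_{a=1}^{p}(θ u^q + u) δ_{al} γ^{al} + Σ_{b=1, b∉{l,...,pl}}^{r} u δ_b γ^b : u ∈ F_{q^k} }`
is a Sidon space. -/
theorem stmt_4 (q k n r p l : ℕ) (hq : IsPrimePow q) (hk : 2 ≤ k) (hr : 2 ≤ r)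
    (hn : n = (2 * r + 1) * k)
    (K M L : Type*) [Field K] [Fintype K] [Field M] [Fintype M] [Field L] [Fintype L]
    [Algebra K M] [Algebra M L] [Algebra K L] [IsScalarTower K M L]
    (hK : Fintype.card K = q) (hM : Fintype.card M = q ^ k) (hL : Fintype.card L = q ^ n)
    (ξ : M) (hξ : orderOf ξ = q ^ k - 1)
    (fpoly : Polynomial M) (hirr : Irreducible fpoly) (hdeg : fpoly.natDegree = 2 * r + 1)
    (γ : L) (hroot : Polynomial.aeval γ fpoly = 0)
    (δ : ℕ → M) (hδ : ∀ i, 1 ≤ i → i ≤ r → δ i ≠ 0)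
    (θ : M) (hθ : ∃ t : ℕ, t ≤ q - 2 ∧ θ = ξ ^ t)
    (hpl : (p = 1 ∧ 1 ≤ l ∧ l ≤ r) ∨
           (2 ≤ p ∧ (r : ℚ) / (p + 1) < l ∧ (l : ℚ) ≤ (r : ℚ) / p)) :
    ∃ U : Submodule K L,
      (U : Set L) = Set.range (fun u : M =>
        algebraMap M L u
        + ∑ a ∈ Finset.Icc 1 p,
            algebraMap M L ((θ * u ^ q + u) * δ (a * l)) * γ ^ (a * l)
        + ∑ b ∈ (Finset.Icc 1 r).filter
            (fun b => b ∉ (Finset.Icc 1 p).image (fun a => a * l)),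
            algebraMap M L (u * δ b) * γ ^ b) ∧
      ∀ a ∈ U, ∀ b ∈ U, ∀ c ∈ U, ∀ d ∈ U,
        a ≠ 0 → b ≠ 0 → c ≠ 0 → d ≠ 0 → a * b = c * d →
        ({Submodule.span K {a}, Submodule.span K {b}} : Set (Submodule K L)) =
          {Submodule.span K {c}, Submodule.span K {d}} :=
  stmt_4_general q k r p l hk K M L hK ξ hξ fpoly hirr hdeg γ hroot δ hδ θ hθ hpl
end

section
/- Let U, V be k-dimensional F_q-subspaces of F_{q^n}. The following are equivalent: (1) dim(U ∩ αV) ≤ 1 for all α ∈ F_{q^n}^*; (2) for all nonzero a, c ∈ U and nonzero b, d ∈ V, the equality ab = cd implies aF_q = cF_q and bF_q = dF_q. -/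
/-!
`U ∩ αV` consists of the `x ∈ U` with `x / α ∈ V`, and `ab = cd` says exactly that `a` and `c` both
lie in `U ∩ (a / d)V`. So a product relation between nonzero vectors of `U` and `V` is the same thing
as two nonzero vectors in one intersection `U ∩ αV`, and condition (1) says any two such are
proportional. Proportionality of `a, c` then transfers to `b, d` by cancelling in `ab = cd`.
-/

open Module

/-- The cyclic shift `αV = {αv : v ∈ V}`. -/
noncomputable def cyclicShift {K L : Type*} [Field K] [Field L] [Algebra K L]
    (α : L) (U : Submodule K L) : Submodule K L :=
  U.map (LinearMap.mulLeft K α)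

theorem Submodule.finrank_le_one_iff_span_singleton_eq {K M : Type*} [DivisionRing K]
    [AddCommGroup M] [Module K M] (W : Submodule K M) [FiniteDimensional K W] :
    finrank K W ≤ 1 ↔
      ∀ x ∈ W, ∀ y ∈ W, x ≠ 0 → y ≠ 0 → K ∙ x = K ∙ y := by
  rw [W.finrank_le_one_iff_isPrincipal]
  constructor
  · rintro ⟨g, rfl⟩ x hx y hy hx0 hy0
    have span_eq {z : M} (hz : z ∈ K ∙ g) (hz0 : z ≠ 0) : K ∙ z = K ∙ g := by
      obtain ⟨a, rfl⟩ := mem_span_singleton.mp hz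
      exact span_singleton_smul_eq (isUnit_iff_ne_zero.mpr (left_ne_zero_of_smul hz0)) g
    rw [span_eq hx hx0, span_eq hy hy0]
  · intro h
    obtain rfl | hW := eq_or_ne W ⊥
    · exact ⟨0, (span_zero_singleton K).symm⟩
    obtain ⟨x, hx, hx0⟩ := exists_mem_ne_zero_of_ne_bot hW
    refine ⟨x, le_antisymm (fun y hy => ?_) ((span_singleton_le_iff_mem x W).mpr hx)⟩
    obtain rfl | hy0 := eq_or_ne y 0
    · exact zero_mem _
    exact h x hx y hy hx0 hy0 ▸ mem_span_singleton_self y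

theorem span_singleton_eq_of_mul_eq_mul {K L : Type*} [Field K] [CommRing L] [IsDomain L]
    [Algebra K L]
    {a b c d : L} (ha : a ≠ 0) (h : a * b = c * d) (hac : K ∙ a = K ∙ c) :
    K ∙ b = K ∙ d := by
  obtain ⟨μ, rfl⟩ := Submodule.span_singleton_eq_span_singleton.mp hac
  have hb : b = μ • d := by
    apply mul_left_cancel₀ ha
    rw [h, smul_mul_assoc, mul_smul_comm]
  rw [hb, Units.smul_def, Submodule.span_singleton_smul_eq μ.isUnit]

theorem mem_cyclicShift {K L : Type*} [Field K] [Field L] [Algebra K L]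
    {α x : L} {V : Submodule K L} : x ∈ cyclicShift α V ↔ ∃ v ∈ V, α * v = x :=
  Submodule.mem_map

theorem stmt_5_general (K L : Type*) [Field K] [Field L] [Fintype L] [Algebra K L]
    (U V : Submodule K L) :
    (∀ α : L, α ≠ 0 → finrank K ↥(U ⊓ cyclicShift α V) ≤ 1) ↔
    (∀ a ∈ U, ∀ c ∈ U, ∀ b ∈ V, ∀ d ∈ V,
      a ≠ 0 → c ≠ 0 → b ≠ 0 → d ≠ 0 → a * b = c * d →
      Submodule.span K ({a} : Set L) = Submodule.span K {c} ∧
      Submodule.span K ({b} : Set L) = Submodule.span K {d}) := by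
  simp only [Submodule.finrank_le_one_iff_span_singleton_eq, Submodule.mem_inf, mem_cyclicShift]
  constructor
  · intro h a ha c hc b hb d hd ha0 hc0 hb0 hd0 habcd
    have hac : K ∙ a = K ∙ c := by
      refine h (a / d) (div_ne_zero ha0 hd0) a ⟨ha, d, hd, div_mul_cancel₀ a hd0⟩
        c ⟨hc, b, hb, ?_⟩ ha0 hc0
      rw [div_mul_eq_mul_div, habcd, mul_div_cancel_right₀ c hd0]
    exact ⟨hac, span_singleton_eq_of_mul_eq_mul ha0 habcd hac⟩
  · rintro h α - x ⟨hx, b, hb, rfl⟩ y ⟨hy, d, hd, rfl⟩ hx0 hy0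
    refine (h _ hx _ hy d hd b hb hx0 hy0 (right_ne_zero_of_mul hy0) (right_ne_zero_of_mul hx0) ?_).1
    ring

/-- For `k`-dimensional `F_q`-subspaces `U, V` of `F_{q^n}`,
the following are equivalent: (1) `dim(U ∩ αV) ≤ 1` for all `α ∈ F_{q^n}^*`;
(2) for all nonzero `a, c ∈ U` and nonzero `b, d ∈ V`, `ab = cd` implies
`aF_q = cF_q` and `bF_q = dF_q`. -/
theorem stmt_5 (q n k : ℕ) (hq : IsPrimePow q) (hn : 0 < n) (hk : 0 < k)
    (K L : Type*) [Field K] [Fintype K] [Field L] [Fintype L] [Algebra K L]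
    (hK : Fintype.card K = q) (hL : Fintype.card L = q ^ n)
    (U V : Submodule K L) (hU : finrank K U = k) (hV : finrank K V = k) :
    (∀ α : L, α ≠ 0 → finrank K ↥(U ⊓ cyclicShift α V) ≤ 1) ↔
    (∀ a ∈ U, ∀ c ∈ U, ∀ b ∈ V, ∀ d ∈ V,
      a ≠ 0 → c ≠ 0 → b ≠ 0 → d ≠ 0 → a * b = c * d →
      Submodule.span K ({a} : Set L) = Submodule.span K {c} ∧
      Submodule.span K ({b} : Set L) = Submodule.span K {d}) :=
  stmt_5_general K L U V
end

section
/- Let q be a prime power, k ≥ 2, n = (2r+1)k with r ≥ 2, ξ primitive in F_{q^k}, and γ a root of an irreducible polynomial of degree 2r+1 over F_{q^k}. Suppose U = { u + Σ_{a=1}^{p}(θ u^q + u) δ_{al} γ^{al} + Σ_{b∉{l,...,pl}} u δ_b γ^b } and U' = { u + Σ_{a=1}^{p'}(θ' u^q + u) δ'_{al'} γ^{al'} + Σ_{b∉{l',...,p'l'}} u δ'_b γ^b } are two subspaces of the first construction with l ≠ l'. Then dim(U ∩ αU') ≤ 1 for every α ∈ F_{q^n}^*. -/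
open Module Polynomial Finset

section aux

variable {M : Type*} [Field M]

/-- auxiliary polynomial encoding one element of the subspace -/
noncomputable def Ppoly (q p l r : ℕ) (θ : M) (δ : ℕ → M) (u : M) : Polynomial M :=
  C u
  + ∑ a ∈ Finset.Icc 1 p, C ((θ * u ^ q + u) * δ (a * l)) * X ^ (a * l)
  + ∑ b ∈ (Finset.Icc 1 r).filter (fun b => b ∉ (Finset.Icc 1 p).image (fun a => a * l)),
      C (u * δ b) * X ^ b

lemma Ppoly_coeff' (q p l r : ℕ) (θ : M) (δ : ℕ → M) (u : M)
    (hl : 1 ≤ l) (i : ℕ) :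
    (Ppoly q p l r θ δ u).coeff i =
      if i = 0 then u
      else if i ∈ (Finset.Icc 1 p).image (fun a => a * l) then (θ * u ^ q + u) * δ i
      else if i ∈ Finset.Icc 1 r then u * δ i
      else 0 := by
  have hsum2 : (∑ a ∈ Finset.Icc 1 p, C ((θ * u ^ q + u) * δ (a * l)) * X ^ (a * l)).coeff i
      = if i ∈ (Finset.Icc 1 p).image (fun a => a * l) then (θ * u ^ q + u) * δ i else 0 := by
    rw [finset_sum_coeff]
    simp only [coeff_C_mul_X_pow]
    by_cases h : i ∈ (Finset.Icc 1 p).image (fun a => a * l)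
    · obtain ⟨a0, ha0, ha0l⟩ := Finset.mem_image.mp h
      rw [if_pos h, Finset.sum_eq_single a0]
      · rw [if_pos ha0l.symm, ha0l]
      · intro a ha hne
        rw [if_neg]
        intro hil
        exact hne (Nat.eq_of_mul_eq_mul_right hl (ha0l ▸ hil.symm))
      · intro h'; exact absurd ha0 h'
    · rw [if_neg h, Finset.sum_eq_zero]
      intro a ha
      rw [if_neg]
      intro hil
      exact h (Finset.mem_image.mpr ⟨a, ha, hil.symm⟩)
  have hsum3 : (∑ b ∈ (Finset.Icc 1 r).filter
        (fun b => b ∉ (Finset.Icc 1 p).image (fun a => a * l)), C (u * δ b) * X ^ b).coeff i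
      = if i ∈ (Finset.Icc 1 r).filter
          (fun b => b ∉ (Finset.Icc 1 p).image (fun a => a * l)) then u * δ i else 0 := by
    rw [finset_sum_coeff]
    simp only [coeff_C_mul_X_pow]
    exact Finset.sum_ite_eq _ i _
  rw [Ppoly, coeff_add, coeff_add, coeff_C, hsum2, hsum3]
  by_cases h0 : i = 0
  · subst h0
    rw [if_pos rfl, if_pos rfl, if_neg, if_neg]
    · ring
    · simp only [Finset.mem_filter, Finset.mem_Icc]
      rintro ⟨⟨h1, -⟩, -⟩; exact absurd h1 (by norm_num)
    · simp only [Finset.mem_image, Finset.mem_Icc]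
      rintro ⟨a, ⟨ha1, -⟩, ha⟩
      have : 1 ≤ a * l := Nat.one_le_iff_ne_zero.mpr (by positivity)
      omega
  · rw [if_neg h0, if_neg h0]
    by_cases hS : i ∈ (Finset.Icc 1 p).image (fun a => a * l)
    · rw [if_pos hS, if_pos hS, if_neg]
      · ring
      · simp only [Finset.mem_filter]
        rintro ⟨-, h'⟩; exact h' hS
    · rw [if_neg hS, if_neg hS]
      by_cases hI : i ∈ Finset.Icc 1 r
      · rw [if_pos hI, if_pos (Finset.mem_filter.mpr ⟨hI, hS⟩)]
        ring
      · rw [if_neg hI, if_neg]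
        · ring
        · simp only [Finset.mem_filter]
          rintro ⟨h', -⟩; exact hI h'

variable {q p l r : ℕ} {θ : M} {δ : ℕ → M} {u : M}

lemma Ppoly_coeff_zero (hl : 1 ≤ l) : (Ppoly q p l r θ δ u).coeff 0 = u := by
  rw [Ppoly_coeff' q p l r θ δ u hl, if_pos rfl]

lemma Ppoly_coeff_low (hl : 1 ≤ l) {i : ℕ} (h1 : 1 ≤ i) (h2 : i < l) (h3 : i ≤ r) :
    (Ppoly q p l r θ δ u).coeff i = u * δ i := by
  rw [Ppoly_coeff' q p l r θ δ u hl, if_neg (by omega), if_neg, if_pos]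
  · exact Finset.mem_Icc.mpr ⟨h1, h3⟩
  · simp only [Finset.mem_image, Finset.mem_Icc]
    rintro ⟨a, ⟨ha1, -⟩, rfl⟩
    have : l ≤ a * l := Nat.le_mul_of_pos_left l ha1
    omega

lemma Ppoly_coeff_l (hl : 1 ≤ l) (hp : 1 ≤ p) :
    (Ppoly q p l r θ δ u).coeff l = (θ * u ^ q + u) * δ l := by
  rw [Ppoly_coeff' q p l r θ δ u hl, if_neg (by omega), if_pos]
  exact Finset.mem_image.mpr ⟨1, Finset.mem_Icc.mpr ⟨le_refl 1, hp⟩, one_mul l⟩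

lemma Ppoly_natDegree_le (hl : 1 ≤ l) (hplr : p * l ≤ r) :
    (Ppoly q p l r θ δ u).natDegree ≤ r := by
  rw [natDegree_le_iff_coeff_eq_zero]
  intro i hi
  rw [Ppoly_coeff' q p l r θ δ u hl, if_neg (by omega), if_neg, if_neg]
  · exact fun h => by simp only [Finset.mem_Icc] at h; omega
  · simp only [Finset.mem_image, Finset.mem_Icc]
    rintro ⟨a, ⟨-, ha2⟩, rfl⟩
    have : a * l ≤ p * l := Nat.mul_le_mul_right l ha2
    omega

lemma Ppoly_zero (hl : 1 ≤ l) (hq : q ≠ 0) : (Ppoly q p l r θ δ (0 : M)) = 0 := by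
  ext i
  rw [Ppoly_coeff' q p l r θ δ 0 hl]
  simp [zero_pow hq]

lemma Ppoly_smul (hl : 1 ≤ l) {σ : M} (hσ : σ ^ q = σ) :
    Ppoly q p l r θ δ (σ * u) = C σ * Ppoly q p l r θ δ u := by
  ext i
  rw [coeff_C_mul, Ppoly_coeff' q p l r θ δ _ hl, Ppoly_coeff' q p l r θ δ u hl]
  split_ifs
  · rfl
  · rw [mul_pow, hσ]; ring
  · ring
  · ring

/-- The key coefficient-comparison lemma. -/
lemma key_lemma {q r p l p' l' : ℕ} {θ θ' : M} {δ δ' : ℕ → M}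
    (hl : 1 ≤ l) (hp : 1 ≤ p) (hl' : 1 ≤ l') (hp' : 1 ≤ p') (hlr : l ≤ r)
    (hll : l < l') (hθ : θ ≠ 0) (hδl : δ l ≠ 0)
    (u1 v1 u2 v2 : M)
    (heq : Ppoly q p l r θ δ u1 * Ppoly q p' l' r θ' δ' v2
        = Ppoly q p l r θ δ u2 * Ppoly q p' l' r θ' δ' v1) :
    u1 * v2 = u2 * v1 ∧ u1 ^ q * v2 = u2 ^ q * v1 := by
  have h0 : u1 * v2 = u2 * v1 := by
    have := congrArg (fun P => Polynomial.coeff P 0) heq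
    simpa only [mul_coeff_zero, Ppoly_coeff_zero hl, Ppoly_coeff_zero hl'] using this
  refine ⟨h0, ?_⟩
  have hc := congrArg (fun P => Polynomial.coeff P l) heq
  simp only [coeff_mul, Finset.Nat.sum_antidiagonal_eq_sum_range_succ_mk] at hc
  have hQ : ∀ (v : M) (j : ℕ), j ≤ l →
      (Ppoly q p' l' r θ' δ' v).coeff j = if j = 0 then v else v * δ' j := by
    intro v j hj
    rcases Nat.eq_zero_or_pos j with rfl | hj1
    · rw [if_pos rfl, Ppoly_coeff_zero hl']
    · rw [if_neg (by omega), Ppoly_coeff_low hl' hj1 (by omega) (by omega)]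
  have hP : ∀ (u : M) (i : ℕ), i ≤ l →
      (Ppoly q p l r θ δ u).coeff i =
        if i = 0 then u else if i = l then (θ * u ^ q + u) * δ l else u * δ i := by
    intro u i hi
    rcases Nat.eq_zero_or_pos i with rfl | hi1
    · rw [if_pos rfl, Ppoly_coeff_zero hl]
    · rw [if_neg (by omega)]
      rcases eq_or_lt_of_le hi with heq' | hil
      · rw [if_pos heq', heq', Ppoly_coeff_l hl hp]
      · rw [if_neg (by omega), Ppoly_coeff_low hl hi1 hil (by omega)]
  have hsum : ∑ k ∈ Finset.range (l + 1),
      ((Ppoly q p l r θ δ u1).coeff k * (Ppoly q p' l' r θ' δ' v2).coeff (l - k)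
       - (Ppoly q p l r θ δ u2).coeff k * (Ppoly q p' l' r θ' δ' v1).coeff (l - k))
      = θ * δ l * (u1 ^ q * v2 - u2 ^ q * v1) := by
    have : ∀ k ∈ Finset.range (l + 1),
        ((Ppoly q p l r θ δ u1).coeff k * (Ppoly q p' l' r θ' δ' v2).coeff (l - k)
         - (Ppoly q p l r θ δ u2).coeff k * (Ppoly q p' l' r θ' δ' v1).coeff (l - k))
        = if k = l then θ * δ l * (u1 ^ q * v2 - u2 ^ q * v1) else 0 := by
      intro k hk
      rw [Finset.mem_range] at hk
      have hkl : k ≤ l := by omega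
      rw [hP u1 k hkl, hP u2 k hkl, hQ v2 (l - k) (by omega), hQ v1 (l - k) (by omega)]
      split_ifs <;>
        first
          | (exfalso; omega)
          | linear_combination δ' (l - k) * h0
          | linear_combination δ l * h0
          | linear_combination δ k * δ' (l - k) * h0
    rw [Finset.sum_congr rfl this, Finset.sum_ite_eq' (Finset.range (l + 1)) l,
      if_pos (Finset.mem_range.mpr (by omega))]
  rw [Finset.sum_sub_distrib, hc, sub_self] at hsum
  rcases mul_eq_zero.mp hsum.symm with h | h
  · exact absurd h (mul_ne_zero hθ hδl)
  · exact sub_eq_zero.mp h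

end aux

/-- A polynomial of degree smaller than that of an irreducible polynomial having `γ` as a
root and itself vanishing at `γ` is zero. -/
lemma poly_eq_zero_of_aeval {M L : Type*} [Field M] [Field L] [Algebra M L]
    {fpoly : Polynomial M} (hirr : Irreducible fpoly) {γ : L}
    (hroot : Polynomial.aeval γ fpoly = 0)
    {P : Polynomial M} (hdeg : P.natDegree < fpoly.natDegree)
    (hP : Polynomial.aeval γ P = 0) : P = 0 := by
  by_contra hne
  have hmin := minpoly.eq_of_irreducible hirr hroot
  have hle := minpoly.degree_le_of_ne_zero M γ hne hP
  have hfne : fpoly ≠ 0 := hirr.ne_zero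
  have hlc : fpoly.leadingCoeff ≠ 0 := Polynomial.leadingCoeff_ne_zero.mpr hfne
  have hdegmin : (minpoly M γ).degree = fpoly.degree := by
    rw [← hmin, Polynomial.degree_mul, Polynomial.degree_C (inv_ne_zero hlc), add_zero]
  rw [hdegmin, Polynomial.degree_eq_natDegree hfne, Polynomial.degree_eq_natDegree hne] at hle
  exact absurd (Nat.cast_le.mp hle) (by omega)

/-- Any element of `M` fixed by the `q`-power map lies in the image of `K`, when `#K = q`. -/
lemma mem_algebraMap_range_of_pow_eq {K M : Type*} [Field K] [Fintype K] [Field M]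
    [Algebra K M] {q : ℕ} (hq2 : 2 ≤ q) (hK : Fintype.card K = q)
    {x : M} (hx : x ^ q = x) : ∃ c : K, algebraMap K M c = x := by
  classical
  set T : Polynomial M := Polynomial.X ^ q - Polynomial.X with hT
  have hdegX : (Polynomial.X : Polynomial M).degree < (Polynomial.X ^ q : Polynomial M).degree := by
    rw [Polynomial.degree_X_pow, Polynomial.degree_X]
    exact_mod_cast by omega
  have hTne : T ≠ 0 := by
    intro h
    have := Polynomial.degree_sub_eq_left_of_degree_lt hdegX
    rw [← hT, h, Polynomial.degree_zero, Polynomial.degree_X_pow] at this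
    exact absurd this.symm (by simp)
  have hTdeg : T.natDegree = q := by
    have := Polynomial.degree_sub_eq_left_of_degree_lt hdegX
    rw [← hT, Polynomial.degree_X_pow] at this
    exact Polynomial.natDegree_eq_of_degree_eq_some this
  have hroots_card : T.roots.toFinset.card ≤ q := by
    calc T.roots.toFinset.card ≤ Multiset.card T.roots := T.roots.toFinset_card_le
    _ ≤ T.natDegree := Polynomial.card_roots' T
    _ = q := hTdeg
  set Kim : Finset M := Finset.univ.image (algebraMap K M) with hKim
  have hKimcard : Kim.card = q := by
    rw [hKim, Finset.card_image_of_injective _ (algebraMap K M).injective,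
      Finset.card_univ, hK]
  have hsub : Kim ⊆ T.roots.toFinset := by
    intro y hy
    rw [hKim, Finset.mem_image] at hy
    obtain ⟨c, -, rfl⟩ := hy
    rw [Multiset.mem_toFinset, Polynomial.mem_roots hTne]
    refine Polynomial.IsRoot.def.mpr ?_
    simp only [hT, Polynomial.eval_sub, Polynomial.eval_pow, Polynomial.eval_X]
    rw [← map_pow, ← hK, FiniteField.pow_card, sub_self]
  have heq : Kim = T.roots.toFinset :=
    Finset.eq_of_subset_of_card_le hsub (by omega)
  have hxmem : x ∈ T.roots.toFinset := by
    rw [Multiset.mem_toFinset, Polynomial.mem_roots hTne]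
    simp only [Polynomial.IsRoot.def, hT, Polynomial.eval_sub, Polynomial.eval_pow,
      Polynomial.eval_X, hx, sub_self]
  rw [← heq, hKim, Finset.mem_image] at hxmem
  obtain ⟨c, -, hc⟩ := hxmem
  exact ⟨c, hc⟩

/-- For two subspaces `U, U'` of the first construction with
`l ≠ l'`, we have `dim(U ∩ αU') ≤ 1` for every `α ∈ F_{q^n}^*`. -/
theorem stmt_7 (q k n r : ℕ) (hq : IsPrimePow q) (hk : 2 ≤ k) (hr : 2 ≤ r)
    (hn : n = (2 * r + 1) * k)
    (K M L : Type*) [Field K] [Fintype K] [Field M] [Fintype M] [Field L] [Fintype L]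
    [Algebra K M] [Algebra M L] [Algebra K L] [IsScalarTower K M L]
    (hK : Fintype.card K = q) (hM : Fintype.card M = q ^ k) (hL : Fintype.card L = q ^ n)
    (ξ : M) (hξ : orderOf ξ = q ^ k - 1)
    (fpoly : Polynomial M) (hirr : Irreducible fpoly) (hdeg : fpoly.natDegree = 2 * r + 1)
    (γ : L) (hroot : Polynomial.aeval γ fpoly = 0)
    -- parameters of the first subspace
    (p l : ℕ) (δ : ℕ → M) (hδ : ∀ i, 1 ≤ i → i ≤ r → δ i ≠ 0)
    (θ : M) (hθ : ∃ t : ℕ, t ≤ q - 2 ∧ θ = ξ ^ t)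
    (hpl : (p = 1 ∧ 1 ≤ l ∧ l ≤ r) ∨
           (2 ≤ p ∧ (r : ℚ) / (p + 1) < l ∧ (l : ℚ) ≤ (r : ℚ) / p))
    -- parameters of the second subspace
    (p' l' : ℕ) (δ' : ℕ → M) (hδ' : ∀ i, 1 ≤ i → i ≤ r → δ' i ≠ 0)
    (θ' : M) (hθ' : ∃ t : ℕ, t ≤ q - 2 ∧ θ' = ξ ^ t)
    (hpl' : (p' = 1 ∧ 1 ≤ l' ∧ l' ≤ r) ∨
            (2 ≤ p' ∧ (r : ℚ) / (p' + 1) < l' ∧ (l' : ℚ) ≤ (r : ℚ) / p'))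
    (hll' : l ≠ l')
    (U U' : Submodule K L)
    (hUcar : (U : Set L) = Set.range (fun u : M =>
      algebraMap M L u
      + ∑ a ∈ Finset.Icc 1 p,
          algebraMap M L ((θ * u ^ q + u) * δ (a * l)) * γ ^ (a * l)
      + ∑ b ∈ (Finset.Icc 1 r).filter
          (fun b => b ∉ (Finset.Icc 1 p).image (fun a => a * l)),
          algebraMap M L (u * δ b) * γ ^ b))
    (hU'car : (U' : Set L) = Set.range (fun u : M =>
      algebraMap M L u
      + ∑ a ∈ Finset.Icc 1 p',
          algebraMap M L ((θ' * u ^ q + u) * δ' (a * l')) * γ ^ (a * l')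
      + ∑ b ∈ (Finset.Icc 1 r).filter
          (fun b => b ∉ (Finset.Icc 1 p').image (fun a => a * l')),
          algebraMap M L (u * δ' b) * γ ^ b)) :
    ∀ α : L, α ≠ 0 → finrank K ↥(U ⊓ cyclicShift α U') ≤ 1 := by
  intro α hα
  classical
  have hq2 : 2 ≤ q := hq.two_le
  -- ξ and θ, θ' are nonzero
  have hξ0 : ξ ≠ 0 := by
    intro h
    have h1 := pow_orderOf_eq_one ξ
    have hqk : 2 ≤ q ^ k := le_trans hq2 (Nat.le_self_pow (by omega) q)
    rw [hξ, h, zero_pow (by omega)] at h1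
    exact one_ne_zero h1.symm
  have hθ0 : θ ≠ 0 := by obtain ⟨t, -, rfl⟩ := hθ; exact pow_ne_zero t hξ0
  have hθ'0 : θ' ≠ 0 := by obtain ⟨t, -, rfl⟩ := hθ'; exact pow_ne_zero t hξ0
  -- parameter facts
  have hfacts : ∀ (P l₀ : ℕ),
      ((P = 1 ∧ 1 ≤ l₀ ∧ l₀ ≤ r) ∨
        (2 ≤ P ∧ (r : ℚ) / (P + 1) < l₀ ∧ (l₀ : ℚ) ≤ (r : ℚ) / P)) →
      1 ≤ P ∧ 1 ≤ l₀ ∧ P * l₀ ≤ r := by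
    rintro P l₀ (⟨rfl, h1, h2⟩ | ⟨hp2, hlow, hhigh⟩)
    · exact ⟨le_refl 1, h1, by omega⟩
    · have hp0 : (0 : ℚ) < P := by exact_mod_cast (by omega : 0 < P)
      have h1 : (l₀ : ℚ) * P ≤ r := by
        rw [le_div_iff₀ hp0] at hhigh; exact hhigh
      have hPl : P * l₀ ≤ r := by
        have : ((P * l₀ : ℕ) : ℚ) ≤ (r : ℚ) := by push_cast; linarith
        exact_mod_cast this
      have hl1 : 1 ≤ l₀ := by
        have hr0 : (0 : ℚ) < (r : ℚ) / (P + 1) := by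
          apply div_pos
          · exact_mod_cast (by omega : 0 < r)
          · positivity
        have : (0 : ℚ) < (l₀ : ℚ) := lt_trans hr0 hlow
        have : 0 < l₀ := by exact_mod_cast this
        omega
      exact ⟨by omega, hl1, hPl⟩
  obtain ⟨hp1, hl1, hplr⟩ := hfacts p l hpl
  obtain ⟨hp1', hl1', hplr'⟩ := hfacts p' l' hpl'
  have hlr : l ≤ r := le_trans (Nat.le_mul_of_pos_left l hp1) hplr
  have hlr' : l' ≤ r := le_trans (Nat.le_mul_of_pos_left l' hp1') hplr'
  -- evaluation maps
  set F : M → L := fun u => Polynomial.aeval γ (Ppoly q p l r θ δ u) with hF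
  set G : M → L := fun v => Polynomial.aeval γ (Ppoly q p' l' r θ' δ' v) with hG
  have hFval : ∀ u : M, F u =
      algebraMap M L u
      + ∑ a ∈ Finset.Icc 1 p,
          algebraMap M L ((θ * u ^ q + u) * δ (a * l)) * γ ^ (a * l)
      + ∑ b ∈ (Finset.Icc 1 r).filter
          (fun b => b ∉ (Finset.Icc 1 p).image (fun a => a * l)),
          algebraMap M L (u * δ b) * γ ^ b := by
    intro u
    simp [hF, Ppoly, map_add, map_sum, map_mul, map_pow]
  have hGval : ∀ v : M, G v =
      algebraMap M L v
      + ∑ a ∈ Finset.Icc 1 p',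
          algebraMap M L ((θ' * v ^ q + v) * δ' (a * l')) * γ ^ (a * l')
      + ∑ b ∈ (Finset.Icc 1 r).filter
          (fun b => b ∉ (Finset.Icc 1 p').image (fun a => a * l')),
          algebraMap M L (v * δ' b) * γ ^ b := by
    intro v
    simp [hG, Ppoly, map_add, map_sum, map_mul, map_pow]
  have hUF : (U : Set L) = Set.range F := by
    rw [hUcar]
    exact congrArg Set.range (funext fun u => (hFval u).symm)
  have hU'G : (U' : Set L) = Set.range G := by
    rw [hU'car]
    exact congrArg Set.range (funext fun v => (hGval v).symm)
  -- membership decomposition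
  have hmemW : ∀ z : L, z ∈ U ⊓ cyclicShift α U' →
      ∃ u v : M, F u = z ∧ α * G v = z := by
    intro z hz
    obtain ⟨hzU, hzS⟩ := Submodule.mem_inf.mp hz
    obtain ⟨u, hu⟩ : z ∈ Set.range F := by rw [← hUF]; exact hzU
    obtain ⟨w, hwU', hwz⟩ := Submodule.mem_map.mp hzS
    obtain ⟨v, hv⟩ : (w : L) ∈ Set.range G := by rw [← hU'G]; exact hwU'
    refine ⟨u, v, hu, ?_⟩
    rw [hv]
    simpa [LinearMap.mulLeft_apply] using hwz
  by_cases hW : ∀ z ∈ U ⊓ cyclicShift α U', z = (0 : L)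
  · rw [(Submodule.eq_bot_iff _).mpr hW]
    simp
  · push_neg at hW
    obtain ⟨x, hxW, hx0⟩ := hW
    have hF0 : F 0 = 0 := by
      rw [hF]; simp only; rw [Ppoly_zero hl1 (show q ≠ 0 by omega)]; simp
    have hG0 : G 0 = 0 := by
      rw [hG]; simp only; rw [Ppoly_zero hl1' (show q ≠ 0 by omega)]; simp
    have hspan : U ⊓ cyclicShift α U' ≤ Submodule.span K {x} := by
      intro y hyW
      rcases eq_or_ne y 0 with rfl | hy0
      · exact Submodule.zero_mem _
      obtain ⟨u1, v1, hu1x, hv1x⟩ := hmemW x hxW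
      obtain ⟨u2, v2, hu2y, hv2y⟩ := hmemW y hyW
      have hu10 : u1 ≠ 0 := by
        rintro rfl; exact hx0 (by rw [← hu1x, hF0])
      have hv10 : v1 ≠ 0 := by
        rintro rfl; exact hx0 (by rw [← hv1x, hG0, mul_zero])
      have hv20 : v2 ≠ 0 := by
        rintro rfl; exact hy0 (by rw [← hv2y, hG0, mul_zero])
      -- the polynomial identity
      have heqL : α * (F u1 * G v2) = α * (F u2 * G v1) := by
        calc α * (F u1 * G v2) = F u1 * (α * G v2) := by ring
        _ = x * y := by rw [hu1x, hv2y]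
        _ = F u2 * (α * G v1) := by rw [hu2y, hv1x]; ring
        _ = α * (F u2 * G v1) := by ring
      have heqL' : F u1 * G v2 = F u2 * G v1 := mul_left_cancel₀ hα heqL
      simp only [hF, hG] at heqL'
      have haev : Polynomial.aeval γ (Ppoly q p l r θ δ u1 * Ppoly q p' l' r θ' δ' v2
          - Ppoly q p l r θ δ u2 * Ppoly q p' l' r θ' δ' v1) = 0 := by
        rw [map_sub, map_mul, map_mul, sub_eq_zero]
        exact heqL'
      have hdlt : (Ppoly q p l r θ δ u1 * Ppoly q p' l' r θ' δ' v2
          - Ppoly q p l r θ δ u2 * Ppoly q p' l' r θ' δ' v1).natDegree < fpoly.natDegree := by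
        rw [hdeg]
        refine lt_of_le_of_lt (Polynomial.natDegree_sub_le _ _) ?_
        have b1 : (Ppoly q p l r θ δ u1 * Ppoly q p' l' r θ' δ' v2).natDegree ≤ r + r :=
          le_trans Polynomial.natDegree_mul_le
            (add_le_add (Ppoly_natDegree_le hl1 hplr) (Ppoly_natDegree_le hl1' hplr'))
        have b2 : (Ppoly q p l r θ δ u2 * Ppoly q p' l' r θ' δ' v1).natDegree ≤ r + r :=
          le_trans Polynomial.natDegree_mul_le
            (add_le_add (Ppoly_natDegree_le hl1 hplr) (Ppoly_natDegree_le hl1' hplr'))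
        omega
      have hpoly : Ppoly q p l r θ δ u1 * Ppoly q p' l' r θ' δ' v2
          = Ppoly q p l r θ δ u2 * Ppoly q p' l' r θ' δ' v1 :=
        sub_eq_zero.mp (poly_eq_zero_of_aeval hirr hroot hdlt haev)
      -- the fixed-point property of u2/u1
      have hlam : (u2 * u1⁻¹) ^ q = u2 * u1⁻¹ := by
        rcases Nat.lt_or_ge l l' with hlt | hge
        · obtain ⟨h0, hq1⟩ :=
            key_lemma hl1 hp1 hl1' hp1' hlr hlt hθ0 (hδ l hl1 hlr) u1 v1 u2 v2 hpoly
          have hcc : (u2 ^ q * u1) * v1 = (u2 * u1 ^ q) * v1 := by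
            linear_combination u1 ^ q * h0 - u1 * hq1
          have h2 : u2 ^ q * u1 = u2 * u1 ^ q := mul_right_cancel₀ hv10 hcc
          rw [mul_pow, inv_pow]
          field_simp
          linear_combination h2
        · have hlt' : l' < l := by omega
          have hpoly' : Ppoly q p' l' r θ' δ' v2 * Ppoly q p l r θ δ u1
              = Ppoly q p' l' r θ' δ' v1 * Ppoly q p l r θ δ u2 := by
            rw [mul_comm, hpoly, mul_comm]
          obtain ⟨h0, hq1⟩ :=
            key_lemma hl1' hp1' hl1 hp1 hlr' hlt' hθ'0 (hδ' l' hl1' hlr') v2 u2 v1 u1 hpoly'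
          have hcc : (v2 ^ q * v1) * u1 = (v1 ^ q * v2) * u1 := by
            linear_combination v1 * hq1 - v1 ^ q * h0
          have h2 : v2 ^ q * v1 = v1 ^ q * v2 := mul_right_cancel₀ hu10 hcc
          have hu2v : u2 * u1⁻¹ = v2 * v1⁻¹ := by
            field_simp
            linear_combination - h0
          rw [hu2v, mul_pow, inv_pow]
          field_simp
          linear_combination h2
      obtain ⟨c, hc⟩ := mem_algebraMap_range_of_pow_eq hq2 hK hlam
      have hu2eq : u2 = algebraMap K M c * u1 := by
        rw [hc]; field_simp
      have hσq : (algebraMap K M c) ^ q = algebraMap K M c := by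
        rw [← map_pow, ← hK, FiniteField.pow_card]
      have hyx : y = algebraMap K L c * x := by
        rw [← hu2y, ← hu1x]
        show Polynomial.aeval γ (Ppoly q p l r θ δ u2) = _
        rw [hu2eq, Ppoly_smul hl1 hσq, map_mul, Polynomial.aeval_C,
          ← IsScalarTower.algebraMap_apply K M L]
      exact Submodule.mem_span_singleton.mpr ⟨c, by rw [Algebra.smul_def, ← hyx]⟩
    calc finrank K ↥(U ⊓ cyclicShift α U')
        ≤ finrank K ↥(Submodule.span K ({x} : Set L)) := Submodule.finrank_mono hspan
    _ = 1 := finrank_span_singleton hx0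
end

section
/- Let q be a prime power and k a positive integer, n = 4k. Let S(k) = (q^k - 1)⌊(q^k - 2)/2⌋(q^{4k} - 1) + ⌊(q^k - 2)/2⌋(q^{4k} - 1)/(q - 1) and let B(k) = (q^{4k} - 1)(q^{4k-1} - 1)/((q^k - 1)(q^{k-1} - 1)). Then the ratio S(k)/B(k) tends to 1/2 as k → ∞. -/
/-! With `x = q^k` and `f = ⌊(x - 2)/2⌋`, dividing numerator and denominator of `S(k)/B(k)` by
`x^6` gives `S(k)/B(k) = (f/x) · ρ(1/x)`, where `ρ` is a rational function continuous at `0`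
with `ρ(0) = 1`. Since `f/x → 1/2` and `1/x → 0`, the ratio tends to `1/2`. -/

open Filter Topology

noncomputable def ratioFactor (c u : ℝ) : ℝ :=
  (1 - u) * (1 - c * u) * ((c - 1) * (1 - u) + u) / ((c - 1) * (1 - c * u ^ 4))

lemma continuousAt_ratioFactor_zero {c : ℝ} (hc : c ≠ 1) : ContinuousAt (ratioFactor c) 0 := by
  unfold ratioFactor
  refine ContinuousAt.div (by fun_prop) (by fun_prop) ?_
  simpa [sub_eq_zero] using hc

lemma ratioFactor_zero {c : ℝ} (hc : c ≠ 1) : ratioFactor c 0 = 1 := by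
  simp [ratioFactor, div_self (sub_ne_zero.mpr hc)]

lemma div_eq_div_mul_ratioFactor {c x : ℝ} (f : ℝ) (hc : 1 < c) (hx : c < x) :
    ((x - 1) * f * (x ^ 4 - 1) + f * (x ^ 4 - 1) / (c - 1)) /
        ((x ^ 4 - 1) * (x ^ 4 * c⁻¹ - 1) / ((x - 1) * (x * c⁻¹ - 1))) =
      f / x * ratioFactor c x⁻¹ := by
  have hx1 : 1 < x := hc.trans hx
  have hx4 : x < x ^ 4 := by
    calc x = x ^ 1 := (pow_one x).symm
      _ < x ^ 4 := pow_lt_pow_right₀ hx1 (by norm_num)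
  have h1 : x - 1 ≠ 0 := by linarith
  have h2 : x - c ≠ 0 := by linarith
  have h3 : x ^ 4 - 1 ≠ 0 := by linarith
  have h4 : x ^ 4 - c ≠ 0 := by linarith
  have h5 : c - 1 ≠ 0 := by linarith
  have hc0 : c ≠ 0 := by linarith
  have hx0 : x ≠ 0 := by linarith
  unfold ratioFactor
  field_simp

lemma tendsto_sub_two_div_two_div_self :
    Tendsto (fun n : ℕ => (((n - 2) / 2 : ℕ) : ℝ) / n) atTop (𝓝 (1 / 2)) := by
  have hlow : Tendsto (fun n : ℕ => 1 / 2 - 3 / 2 * (n : ℝ)⁻¹) atTop (𝓝 (1 / 2)) := by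
    simpa using (tendsto_inv_atTop_zero.comp tendsto_natCast_atTop_atTop).const_mul (3 / 2 : ℝ)
      |>.const_sub (1 / 2 : ℝ)
  refine tendsto_of_tendsto_of_tendsto_of_le_of_le' hlow tendsto_const_nhds ?_ ?_
  · filter_upwards [eventually_ge_atTop 3] with n hn
    have hn' : (0 : ℝ) < n := by positivity
    have : (n : ℝ) - 3 ≤ 2 * (((n - 2) / 2 : ℕ) : ℝ) := by
      have : n - 3 ≤ 2 * ((n - 2) / 2) := by omega
      have := (Nat.cast_le (α := ℝ)).mpr this
      push_cast [Nat.cast_sub (by omega : 3 ≤ n)] at this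
      exact this
    rw [le_div_iff₀ hn', sub_mul, inv_mul_cancel_right₀ hn'.ne']
    linarith
  · filter_upwards [eventually_ge_atTop 1] with n hn
    have hn' : (0 : ℝ) < n := by positivity
    have : 2 * (((n - 2) / 2 : ℕ) : ℝ) ≤ n := by
      exact_mod_cast (show 2 * ((n - 2) / 2) ≤ n by omega)
    rw [div_le_iff₀ hn']
    linarith

/-- With
`S(k) = (q^k-1)⌊(q^k-2)/2⌋(q^{4k}-1) + ⌊(q^k-2)/2⌋(q^{4k}-1)/(q-1)` and
`B(k) = (q^{4k}-1)(q^{4k-1}-1)/((q^k-1)(q^{k-1}-1))`, the ratio `S(k)/B(k)`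
tends to `1/2` as `k → ∞`. -/
theorem stmt_12 (q : ℕ) (hq : IsPrimePow q)
    (S B : ℕ → ℝ)
    (hS : ∀ k : ℕ, S k =
      ((q : ℝ) ^ k - 1) * (((q ^ k - 2) / 2 : ℕ) : ℝ) * ((q : ℝ) ^ (4 * k) - 1)
        + (((q ^ k - 2) / 2 : ℕ) : ℝ) * ((q : ℝ) ^ (4 * k) - 1) / ((q : ℝ) - 1))
    (hB : ∀ k : ℕ, B k =
      ((q : ℝ) ^ (4 * k) - 1) * ((q : ℝ) ^ (4 * k - 1) - 1)
        / (((q : ℝ) ^ k - 1) * ((q : ℝ) ^ (k - 1) - 1))) :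
    Tendsto (fun k : ℕ => S k / B k) atTop (nhds (1 / 2)) := by
  have hq1 : 1 < q := hq.one_lt
  have hc : (1 : ℝ) < q := by exact_mod_cast hq1
  have hpow : Tendsto (fun k : ℕ => q ^ k) atTop atTop := tendsto_pow_atTop_atTop_of_one_lt hq1
  have hfloor : Tendsto (fun k : ℕ => (((q ^ k - 2) / 2 : ℕ) : ℝ) / (q : ℝ) ^ k) atTop
      (𝓝 (1 / 2)) :=
    (tendsto_sub_two_div_two_div_self.comp hpow).congr fun k => by simp
  have hfactor : Tendsto (fun k : ℕ => ratioFactor q ((q : ℝ) ^ k)⁻¹) atTop (𝓝 1) := by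
    rw [← ratioFactor_zero hc.ne']
    exact (continuousAt_ratioFactor_zero hc.ne').tendsto.comp
      (tendsto_pow_atTop_atTop_of_one_lt hc).inv_tendsto_atTop
  have hprod := hfloor.mul hfactor
  rw [mul_one] at hprod
  refine hprod.congr' ?_
  -- for `k = 1` the denominator of `B 1` vanishes and `B 1 = 0` is a junk value
  filter_upwards [eventually_ge_atTop 2] with k hk
  have hx : (q : ℝ) < (q : ℝ) ^ k := by
    simpa using pow_lt_pow_right₀ hc (show 1 < k by omega)
  rw [hS, hB, pow_sub₀ _ (by positivity) (by omega : 1 ≤ 4 * k),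
    pow_sub₀ _ (by positivity) (by omega : 1 ≤ k), pow_one, mul_comm 4 k, pow_mul,
    div_eq_div_mul_ratioFactor _ hc hx]
end

section
/- (Johnson bound) Let C ⊆ G_q(n,k) be a constant-dimension subspace code with minimum subspace distance 2δ. Then |C| ≤ Π_{i=0}^{k-δ} (q^{n-i} - 1)/(q^{k-i} - 1). -/
open Module

/-- The subspace distance `d(X,Y) = dim X + dim Y - 2 dim(X ∩ Y)`. -/
noncomputable def subspaceDist {K V : Type*} [Field K] [AddCommGroup V] [Module K V]
    (X Y : Submodule K V) : ℕ :=
  finrank K X + finrank K Y - 2 * finrank K ↥(X ⊓ Y)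

/-- The minimum subspace distance of a code. -/
noncomputable def minDist {K V : Type*} [Field K] [AddCommGroup V] [Module K V]
    (C : Set (Submodule K V)) : ℕ :=
  sInf {d : ℕ | ∃ X ∈ C, ∃ Y ∈ C, X ≠ Y ∧ d = subspaceDist X Y}

/-- Counting linearly independent tuples with values in a submodule. -/
lemma card_li_in_submodule {K V : Type*} [Field K] [Fintype K] [AddCommGroup V] [Module K V]
    [Finite V] (U : Submodule K V) (t : ℕ) (ht : t ≤ finrank K U) :
    Nat.card {s : Fin t → V // LinearIndependent K s ∧ ∀ i, s i ∈ U} =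
      ∏ i ∈ Finset.range t, (Fintype.card K ^ finrank K U - Fintype.card K ^ i) := by
  have e : {s : Fin t → V // LinearIndependent K s ∧ ∀ i, s i ∈ U} ≃
      {s : Fin t → ↥U // LinearIndependent K s} := by
    refine ⟨fun s => ⟨fun i => ⟨s.1 i, s.2.2 i⟩, ?_⟩,
      fun s => ⟨fun i => (s.1 i : V), ?_, fun i => (s.1 i).2⟩, fun s => rfl, fun s => rfl⟩
    · apply LinearIndependent.of_comp U.subtype
      exact s.2.1
    · exact s.2.map' U.subtype U.ker_subtype
  rw [Nat.card_congr e, card_linearIndependent ht, ← Fin.prod_univ_eq_prod_range]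

/-- **Johnson bound.** If `C ⊆ G_q(n,k)` is a constant-dimension
subspace code with minimum subspace distance `2δ`, then
`|C| ≤ Π_{i=0}^{k-δ} (q^{n-i} - 1)/(q^{k-i} - 1)`. -/
theorem stmt_13 (q n k δ : ℕ) (hq : IsPrimePow q) (hδ : 1 ≤ δ) (hδk : δ ≤ k) (hkn : k ≤ n)
    (K : Type*) [Field K] [Fintype K] (hK : Fintype.card K = q)
    (C : Set (Submodule K (Fin n → K)))
    (hdim : ∀ U ∈ C, finrank K U = k)
    (hmin : minDist C = 2 * δ) :
    (C.ncard : ℝ) ≤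
      ∏ i ∈ Finset.range (k - δ + 1),
        ((q : ℝ) ^ (n - i) - 1) / ((q : ℝ) ^ (k - i) - 1) := by
  classical
  set V := (Fin n → K)
  have hq2 : 2 ≤ q := hq.two_le
  set t : ℕ := k - δ + 1 with ht_def
  have htk : t ≤ k := by omega
  have hfr : finrank K V = n := by
    simp [V, Module.finrank_pi]
  -- finsets of tuples
  let g : Submodule K V → Finset (Fin t → V) :=
    fun U => Finset.univ.filter (fun s => LinearIndependent K s ∧ ∀ i, s i ∈ U)
  have hgcard : ∀ U ∈ C, (g U).card =
      ∏ i ∈ Finset.range t, (q ^ k - q ^ i) := by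
    intro U hU
    have := card_li_in_submodule U t (by rw [hdim U hU]; exact htk)
    rw [Nat.card_eq_fintype_card, Fintype.card_subtype] at this
    rw [show (g U).card = _ from this, hdim U hU, hK]
  -- C is finite
  have hCfin : C.Finite := by
    have : Finite (Submodule K V) :=
      Finite.of_injective (fun U => (U : Set V)) SetLike.coe_injective
    exact Set.toFinite C
  set F := hCfin.toFinset with hF
  -- disjointness
  have hdisj : ∀ U ∈ F, ∀ W ∈ F, U ≠ W → Disjoint (g U) (g W) := by
    intro U hU W hW hUW
    rw [hF, Set.Finite.mem_toFinset] at hU hW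
    rw [Finset.disjoint_left]
    intro s hsU hsW
    simp only [g, Finset.mem_filter] at hsU hsW
    have hli := hsU.2.1
    have hspan : Submodule.span K (Set.range s) ≤ U ⊓ W := by
      rw [Submodule.span_le]
      rintro x ⟨i, rfl⟩
      exact ⟨hsU.2.2 i, hsW.2.2 i⟩
    have hrk : finrank K (Submodule.span K (Set.range s)) = t := by
      rw [finrank_span_eq_card hli, Fintype.card_fin]
    have h1 : t ≤ finrank K ↥(U ⊓ W) := by
      rw [← hrk]; exact Submodule.finrank_mono hspan
    have h2 : finrank K ↥(U ⊓ W) ≤ k := by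
      rw [← hdim U hU]; exact Submodule.finrank_mono inf_le_left
    have h3 : 2 * δ ≤ subspaceDist U W := by
      rw [← hmin]
      exact Nat.sInf_le ⟨U, hU, W, hW, hUW, rfl⟩
    rw [subspaceDist, hdim U hU, hdim W hW] at h3
    omega
  -- counting
  have hbig : (F.biUnion g).card ≤ ∏ i ∈ Finset.range t, (q ^ n - q ^ i) := by
    have hsub : F.biUnion g ⊆ Finset.univ.filter (fun s : Fin t → V => LinearIndependent K s) := by
      intro s hs
      rw [Finset.mem_biUnion] at hs
      obtain ⟨U, _, hsU⟩ := hs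
      simp only [g, Finset.mem_filter] at hsU ⊢
      exact ⟨Finset.mem_univ _, hsU.2.1⟩
    refine (Finset.card_le_card hsub).trans ?_
    have := card_linearIndependent (K := K) (V := V) (k := t) (by rw [hfr]; omega)
    rw [Nat.card_eq_fintype_card, Fintype.card_subtype] at this
    rw [this, hfr, hK, ← Fin.prod_univ_eq_prod_range]
  have hkey : C.ncard * ∏ i ∈ Finset.range t, (q ^ k - q ^ i) ≤
      ∏ i ∈ Finset.range t, (q ^ n - q ^ i) := by
    rw [Finset.card_biUnion hdisj] at hbig
    calc C.ncard * ∏ i ∈ Finset.range t, (q ^ k - q ^ i)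
        = ∑ U ∈ F, ∏ i ∈ Finset.range t, (q ^ k - q ^ i) := by
          rw [Finset.sum_const, smul_eq_mul]
          congr 1
          exact Set.ncard_eq_toFinset_card C hCfin
      _ = ∑ U ∈ F, (g U).card := by
          refine Finset.sum_congr rfl fun U hU => ?_
          rw [hgcard U (by rwa [hF, Set.Finite.mem_toFinset] at hU)]
      _ ≤ _ := hbig
  -- pass to reals
  have hPk_pos : 0 < ∏ i ∈ Finset.range t, (q ^ k - q ^ i) := by
    apply Finset.prod_pos
    intro i hi
    rw [Finset.mem_range] at hi
    have : q ^ i < q ^ k := Nat.pow_lt_pow_right (by omega) (by omega)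
    omega
  have hcast : ∀ m : ℕ, k ≤ m →
      ((∏ i ∈ Finset.range t, (q ^ m - q ^ i) : ℕ) : ℝ) =
        ∏ i ∈ Finset.range t, ((q:ℝ) ^ m - (q:ℝ) ^ i) := by
    intro m hm
    rw [Nat.cast_prod]
    refine Finset.prod_congr rfl fun i hi => ?_
    rw [Finset.mem_range] at hi
    have : q ^ i ≤ q ^ m := Nat.pow_le_pow_right (by omega) (by omega)
    push_cast [Nat.cast_sub this]
    ring
  have hprod_eq : ∏ i ∈ Finset.range t, ((q : ℝ) ^ (n - i) - 1) / ((q : ℝ) ^ (k - i) - 1) =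
      (∏ i ∈ Finset.range t, ((q:ℝ) ^ n - (q:ℝ) ^ i)) /
        (∏ i ∈ Finset.range t, ((q:ℝ) ^ k - (q:ℝ) ^ i)) := by
    rw [← Finset.prod_div_distrib]
    refine Finset.prod_congr rfl fun i hi => ?_
    rw [Finset.mem_range] at hi
    have hik : i < k := by omega
    have hq1 : (1:ℝ) < (q:ℝ) := by exact_mod_cast by omega
    have hn' : (q:ℝ) ^ n = (q:ℝ) ^ (n - i) * (q:ℝ) ^ i := by
      rw [← pow_add]; congr 1; omega
    have hk' : (q:ℝ) ^ k = (q:ℝ) ^ (k - i) * (q:ℝ) ^ i := by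
      rw [← pow_add]; congr 1; omega
    have hd1 : (q:ℝ) ^ (k - i) - 1 ≠ 0 := by
      have : (1:ℝ) < (q:ℝ) ^ (k - i) := one_lt_pow₀ hq1 (by omega)
      linarith
    have hd2 : (q:ℝ) ^ i ≠ 0 := by positivity
    have e1 : (q:ℝ) ^ (n-i) * (q:ℝ) ^ i - (q:ℝ) ^ i = ((q:ℝ) ^ (n-i) - 1) * (q:ℝ) ^ i := by ring
    have e2 : (q:ℝ) ^ (k-i) * (q:ℝ) ^ i - (q:ℝ) ^ i = ((q:ℝ) ^ (k-i) - 1) * (q:ℝ) ^ i := by ring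
    rw [hn', hk', e1, e2, mul_div_mul_right _ _ hd2]
  rw [hprod_eq]
  rw [le_div_iff₀ (by
    have := hcast k le_rfl
    rw [← this]
    exact_mod_cast hPk_pos)]
  rw [← hcast k le_rfl, ← hcast n hkn]
  exact_mod_cast hkey
end

section
/- Let V and W be finite-dimensional F_q-subspaces of F_{q^N}. Then V = W if and only if their subspace polynomials P_V(x) = Π_{v ∈ V}(x - v) and P_W(x) = Π_{w ∈ W}(x - w) are equal. Moreover, dim_{F_q}(V ∩ W) = log_q(deg gcd(P_V, P_W)). -/
open Polynomial Module

/-- Finite-dimensional `F_q`-subspaces `V, W` of `F_{q^N}` are equal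
iff their subspace polynomials `P_V(x) = Π_{v∈V}(x-v)` and `P_W(x) = Π_{w∈W}(x-w)` are
equal; moreover `dim(V ∩ W) = log_q(deg gcd(P_V, P_W))`. -/
theorem stmt_16 (q N : ℕ) (hq : IsPrimePow q) (hN : 0 < N)
    (K L : Type*) [Field K] [Fintype K] [Field L] [Fintype L] [Algebra K L]
    (hK : Fintype.card K = q) (hL : Fintype.card L = q ^ N)
    (V W : Submodule K L) :
    (V = W ↔
      ∏ v ∈ (Set.toFinite (V : Set L)).toFinset, (X - C v) =
        ∏ w ∈ (Set.toFinite (W : Set L)).toFinset, (X - C w)) ∧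
    finrank K ↥(V ⊓ W) =
      Nat.log q (@EuclideanDomain.gcd _ _ (Classical.decEq _)
        (∏ v ∈ (Set.toFinite (V : Set L)).toFinset, (X - C v))
        (∏ w ∈ (Set.toFinite (W : Set L)).toFinset, (X - C w))).natDegree := by
  classical
  set s : Finset L := (Set.toFinite (V : Set L)).toFinset with hs_def
  set t : Finset L := (Set.toFinite (W : Set L)).toFinset with ht_def
  have hs : ∀ a, a ∈ s ↔ a ∈ V := fun a => Set.Finite.mem_toFinset _
  have ht : ∀ a, a ∈ t ↔ a ∈ W := fun a => Set.Finite.mem_toFinset _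
  constructor
  · constructor
    · intro h; subst h; rfl
    · intro h
      have hroots := congrArg Polynomial.roots h
      rw [roots_prod_X_sub_C, roots_prod_X_sub_C] at hroots
      have hst : s = t := Finset.val_injective hroots
      ext a
      rw [← hs a, ← ht a, hst]
  · -- second part
    set u : Finset L := s ∩ t with hu_def
    set b : L[X] := ∏ a ∈ s \ t, (X - C a) with hb_def
    set c : L[X] := ∏ a ∈ t \ s, (X - C a) with hc_def
    set m : L[X] := ∏ a ∈ u, (X - C a) with hm_def
    have hsb : ∏ a ∈ s, (X - C a) = m * b := (Finset.prod_inter_mul_prod_diff s t _).symm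
    have htc : ∏ a ∈ t, (X - C a) = m * c := by
      rw [← Finset.prod_inter_mul_prod_diff t s fun a => (X - C a)]
      rw [Finset.inter_comm t s, ← hu_def]
    have hm0 : m ≠ 0 := (monic_prod_of_monic _ _ fun a _ => monic_X_sub_C a).ne_zero
    set g : L[X] := @EuclideanDomain.gcd _ _ (Classical.decEq _)
        (∏ a ∈ s, (X - C a)) (∏ a ∈ t, (X - C a)) with hg_def
    have hgl : g ∣ ∏ a ∈ s, (X - C a) := @EuclideanDomain.gcd_dvd_left _ _ (Classical.decEq _) _ _
    have hgr : g ∣ ∏ a ∈ t, (X - C a) := @EuclideanDomain.gcd_dvd_right _ _ (Classical.decEq _) _ _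
    have hmg : m ∣ g := by
      refine @EuclideanDomain.dvd_gcd _ _ (Classical.decEq _) _ _ _ ?_ ?_
      · rw [hsb]; exact dvd_mul_right _ _
      · rw [htc]; exact dvd_mul_right _ _
    obtain ⟨d, hd⟩ := hmg
    have hdb : d ∣ b := by
      have : m * d ∣ m * b := hd ▸ (hsb ▸ hgl)
      exact (mul_dvd_mul_iff_left hm0).mp this
    have hdc : d ∣ c := by
      have : m * d ∣ m * c := hd ▸ (htc ▸ hgr)
      exact (mul_dvd_mul_iff_left hm0).mp this
    have hbc : IsCoprime b c := by
      refine IsCoprime.prod_left fun x hx => IsCoprime.prod_right fun y hy => ?_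
      have hxy : x ≠ y := by
        rintro rfl
        exact (Finset.mem_sdiff.mp hy).2 (Finset.mem_sdiff.mp hx).1
      exact isCoprime_X_sub_C_of_isUnit_sub (sub_ne_zero_of_ne hxy).isUnit
    have hdunit : IsUnit d := hbc.isUnit_of_dvd' hdb hdc
    have hdeg : g.natDegree = u.card := by
      rw [hd, natDegree_mul hm0 hdunit.ne_zero, natDegree_eq_zero_of_isUnit hdunit,
        add_zero, hm_def, natDegree_prod _ _ fun a _ => X_sub_C_ne_zero a]
      simp [natDegree_X_sub_C]
    have huVW : u = (Set.toFinite ((V ⊓ W : Submodule K L) : Set L)).toFinset := by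
      ext a
      simp only [hu_def, Finset.mem_inter, hs a, ht a, Set.Finite.mem_toFinset,
        SetLike.mem_coe, Submodule.mem_inf]
    have hcard : u.card = Fintype.card ↥(V ⊓ W) := by
      rw [huVW, Set.Finite.card_toFinset]
      rfl
    have hcard2 : Fintype.card ↥(V ⊓ W) = q ^ finrank K ↥(V ⊓ W) := by
      rw [← hK]; exact card_eq_pow_finrank
    rw [hdeg, hcard, hcard2, Nat.log_pow hq.one_lt]
end
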